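/- arXiv:1504.01529 — 8 statements merged into one kernel-verified Lean document; each statement's English description precedes it below -/
import Mathlib

section
/- Let μ : [0,1] → ℝ be continuous and nonnegative with μ(0) > 0 and μ(1) > 0, and let θ ∈ (π/2, π). Then there exists θ' ∈ (π/2, π), depending only on μ and θ, such that for every z ∈ Σ_θ one has z·w(z) ∈ Σ_{θ'}, i.e. z·w(z) ≠ 0 and |arg(z·w(z))| < θ'. -/
/-!
For `z = r e^{iφ}` with `|φ| < π`, rotating by `e^{-iφ/2}` gives
`Re (e^{-iφ/2} z^α) = r^α cos (φ (α - 1/2)) ≥ 0` on `[0,1]`, strictly positive at `α = 0`.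
Hence `z w(z) = ∫₀¹ z^α μ(α) dα` is `e^{iφ/2}` times a number with positive real part, so
`|arg (z w(z))| < |φ|/2 + π/2 < θ/2 + π/2`, and `θ' = θ/2 + π/2` works.
-/

open Real MeasureTheory

/-- `w μ z = ∫₀¹ z^(α-1) μ(α) dα`, using the principal branch complex power. -/
noncomputable def w (μ : ℝ → ℝ) (z : ℂ) : ℂ :=
  ∫ α in (0:ℝ)..1, z ^ ((α : ℂ) - 1) * (μ α : ℂ)

open Complex (I)

lemma mul_w_eq_integral (μ : ℝ → ℝ) {z : ℂ} (hz : z ≠ 0) :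
    z * w μ z = ∫ α in (0:ℝ)..1, z ^ (α : ℂ) * μ α := by
  rw [w, ← intervalIntegral.integral_const_mul]
  refine intervalIntegral.integral_congr fun α _ => ?_
  rw [← mul_assoc, Complex.cpow_sub _ _ hz, Complex.cpow_one, mul_div_cancel₀ _ hz]

lemma re_exp_neg_half_arg_mul_cpow_ofReal (z : ℂ) (α : ℝ) :
    (Complex.exp (-(z.arg / 2 : ℝ) * I) * z ^ (α : ℂ)).re =
      ‖z‖ ^ α * Real.cos (z.arg * (α - 1 / 2)) := by
  rw [Complex.mul_re, Complex.cpow_ofReal_re, Complex.cpow_ofReal_im, ← Complex.ofReal_neg,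
    Complex.exp_ofReal_mul_I_re, Complex.exp_ofReal_mul_I_im,
    show z.arg * (α - 1 / 2) = z.arg * α - z.arg / 2 by ring, Real.cos_sub,
    Real.cos_neg, Real.sin_neg]
  ring

lemma cos_mul_sub_half_nonneg {φ α : ℝ} (hφ : |φ| ≤ π) (hα : α ∈ Set.Icc (0 : ℝ) 1) :
    0 ≤ Real.cos (φ * (α - 1 / 2)) := by
  have hα' : |α - 1 / 2| ≤ 1 / 2 := abs_le.2 ⟨by linarith [hα.1], by linarith [hα.2]⟩
  have : |φ * (α - 1 / 2)| ≤ π / 2 := by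
    rw [abs_mul]
    nlinarith [abs_nonneg φ, abs_nonneg (α - 1 / 2)]
  exact Real.cos_nonneg_of_mem_Icc (abs_le.1 this)

lemma abs_arg_exp_mul_I_mul_lt {t : ℝ} {u : ℂ} (ht : |t| < π / 2) (hu : 0 < u.re) :
    |(Complex.exp (t * I) * u).arg| < |t| + π / 2 := by
  have hu' := Complex.abs_arg_lt_pi_div_two_iff.2 (Or.inl hu)
  obtain ⟨ht₁, ht₂⟩ := abs_lt.1 ht
  obtain ⟨hu₁, hu₂⟩ := abs_lt.1 hu'
  have harg : (Complex.exp (t * I)).arg = t := by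
    rw [Complex.exp_mul_I]
    exact_mod_cast Complex.arg_cos_add_sin_mul_I ⟨by linarith, by linarith⟩
  rw [Complex.arg_mul (Complex.exp_ne_zero _) (Complex.ne_zero_of_re_pos hu)
    (by rw [harg]; constructor <;> linarith), harg]
  calc |t + u.arg| ≤ |t| + |u.arg| := abs_add_le _ _
    _ < |t| + π / 2 := by linarith

lemma re_exp_neg_half_arg_mul_integral_pos {μ : ℝ → ℝ} (hc : ContinuousOn μ (Set.Icc 0 1))
    (hnn : ∀ α ∈ Set.Icc (0:ℝ) 1, 0 ≤ μ α) (h0 : 0 < μ 0) {z : ℂ} (hz : z ≠ 0)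
    (hφ : |z.arg| < π) :
    0 < (Complex.exp (-(z.arg / 2 : ℝ) * I) * ∫ α in (0:ℝ)..1, z ^ (α : ℂ) * μ α).re := by
  have hint : IntervalIntegrable (fun α : ℝ => z ^ (α : ℂ) * μ α) volume 0 1 :=
    ContinuousOn.intervalIntegrable_of_Icc zero_le_one <|
      (Complex.continuous_ofReal.const_cpow (Or.inl hz)).continuousOn.mul
        (Complex.continuous_ofReal.comp_continuousOn hc)
  rw [← intervalIntegral.integral_const_mul, ← Complex.reCLM_apply,
    ← ContinuousLinearMap.intervalIntegral_comp_comm _ (hint.const_mul _)]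
  simp only [Complex.reCLM_apply, ← mul_assoc, Complex.re_mul_ofReal,
    re_exp_neg_half_arg_mul_cpow_ofReal]
  refine intervalIntegral.integral_pos zero_lt_one ?_ (fun α hα => ?_) ⟨0, by simp, ?_⟩
  · have := norm_ne_zero_iff.2 hz
    exact (Continuous.continuousOn (by fun_prop)).mul hc
  · have hα' := Set.Ioc_subset_Icc_self hα
    exact mul_nonneg (mul_nonneg (by positivity) (cos_mul_sub_half_nonneg hφ.le hα'))
      (hnn α hα')
  · have hcos : 0 < Real.cos (z.arg * (0 - 1 / 2)) := by
      obtain ⟨hφ₁, hφ₂⟩ := abs_lt.1 hφ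
      exact Real.cos_pos_of_mem_Ioo ⟨by linarith, by linarith⟩
    simpa using mul_pos hcos h0

theorem stmt_0_general (μ : ℝ → ℝ) (hc : ContinuousOn μ (Set.Icc 0 1))
    (hnn : ∀ α ∈ Set.Icc (0:ℝ) 1, 0 ≤ μ α) (h0 : 0 < μ 0)
    (θ : ℝ) (hθ : θ ∈ Set.Ioo (π / 2) π) :
    ∃ θ' ∈ Set.Ioo (π / 2) π, ∀ z : ℂ, z ≠ 0 → |z.arg| < θ →
      z * w μ z ≠ 0 ∧ |(z * w μ z).arg| < θ' := by
  obtain ⟨hθ₁, hθ₂⟩ := hθ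
  refine ⟨θ / 2 + π / 2, ⟨by linarith, by linarith⟩, fun z hz hzθ => ?_⟩
  set u := Complex.exp (-(z.arg / 2 : ℝ) * I) * ∫ α in (0:ℝ)..1, z ^ (α : ℂ) * μ α
  have hu : 0 < u.re := re_exp_neg_half_arg_mul_integral_pos hc hnn h0 hz (hzθ.trans hθ₂)
  have hzw : z * w μ z = Complex.exp ((z.arg / 2 : ℝ) * I) * u := by
    rw [mul_w_eq_integral μ hz, ← mul_assoc, ← Complex.exp_add, neg_mul, add_neg_cancel,
      Complex.exp_zero, one_mul]
  have hhalf : |z.arg / 2| < θ / 2 := by rw [abs_div, abs_two]; linarith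
  refine ⟨hzw ▸ mul_ne_zero (Complex.exp_ne_zero _) (Complex.ne_zero_of_re_pos hu), ?_⟩
  calc |(z * w μ z).arg| < |z.arg / 2| + π / 2 :=
        hzw ▸ abs_arg_exp_mul_I_mul_lt (by linarith) hu
    _ < θ / 2 + π / 2 := by linarith

theorem stmt_0 (μ : ℝ → ℝ) (hc : ContinuousOn μ (Set.Icc 0 1))
    (hnn : ∀ α ∈ Set.Icc (0:ℝ) 1, 0 ≤ μ α) (h0 : 0 < μ 0) (h1 : 0 < μ 1)
    (θ : ℝ) (hθ : θ ∈ Set.Ioo (π / 2) π) :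
    ∃ θ' ∈ Set.Ioo (π / 2) π, ∀ z : ℂ, z ≠ 0 → |z.arg| < θ →
      z * w μ z ≠ 0 ∧ |(z * w μ z).arg| < θ' :=
  stmt_0_general μ hc hnn h0 θ hθ
end

section
/- Let μ : [0,1] → ℝ be continuous and nonnegative with μ(0) > 0. Then there exists r₀ ∈ (0,1) such that for every z ∈ ℂ with 0 < |z| < r₀ and |arg z| < π, one has Re(z·w(z)) > 0. -/
open Real MeasureTheory

/-!
With `r = ‖z‖` and `θ = arg z`, `Re (z w(z)) = ∫₀¹ r^α cos(αθ) μ(α) dα`. For `α ∈ [0, δ]` with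
`δ ≤ 1/3` small enough, both `cos(αθ) ≥ 1/2` and `μ(α) ≥ μ(0)/2`, so the integral over `[0, δ/2]`
is at least `(δ/2) r^(δ/2) μ(0)/4`, the part over `[δ/2, δ]` is nonnegative, and the rest is
`O(r^δ)`. As `r → 0`, `r^(δ/2)` dominates `r^δ`.
-/

open Set Filter Topology

lemma one_half_le_cos_of_abs_le {x : ℝ} (hx : |x| ≤ π / 3) : 1 / 2 ≤ cos x := by
  rw [← cos_abs, ← cos_pi_div_three]
  exact cos_le_cos_of_nonneg_of_le_pi (abs_nonneg x) (by linarith [pi_pos]) hx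

lemma exists_forall_Icc_lt_of_continuousWithinAt {f : ℝ → ℝ} {a b c : ℝ} (hab : a < b)
    (hf : ContinuousWithinAt f (Icc a b) a) (hc : c < f a) :
    ∃ u > a, ∀ x ∈ Icc a u, c < f x := by
  rw [ContinuousWithinAt, nhdsWithin_Icc_eq_nhdsGE hab] at hf
  exact mem_nhdsGE_iff_exists_Icc_subset.1 (hf.eventually (lt_mem_nhds hc))

lemma re_mul_w {μ : ℝ → ℝ} (hμ : ContinuousOn μ (Icc 0 1)) {z : ℂ} (hz : z ≠ 0) :
    (z * w μ z).re = ∫ α in (0:ℝ)..1, ‖z‖ ^ α * (cos (z.arg * α) * μ α) := by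
  have hint : IntervalIntegrable (fun α : ℝ => z ^ (α : ℂ) * (μ α : ℂ)) volume 0 1 := by
    refine ContinuousOn.intervalIntegrable ?_
    rw [uIcc_of_le zero_le_one]
    exact ((Complex.continuous_ofReal.const_cpow (Or.inl hz)).continuousOn).mul
      (Complex.continuous_ofReal.comp_continuousOn hμ)
  have hzw : z * w μ z = ∫ α in (0:ℝ)..1, z ^ (α : ℂ) * (μ α : ℂ) := by
    rw [w, ← intervalIntegral.integral_const_mul]
    congr 1 with α
    rw [Complex.cpow_sub _ _ hz, Complex.cpow_one, ← mul_assoc, mul_div_cancel₀ _ hz]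
  rw [hzw, ← Complex.reCLM_apply, ← Complex.reCLM.intervalIntegral_comp_comm hint]
  congr 1 with α
  simp only [Complex.reCLM_apply, Complex.re_mul_ofReal, Complex.cpow_ofReal_re, mul_assoc]

lemma eventually_forall_integral_rpow_mul_pos {δ c M : ℝ} (hδ : 0 < δ) (hδ1 : δ ≤ 1)
    (hc : 0 < c) (hM : 0 ≤ M) :
    ∀ᶠ r in 𝓝[>] 0, ∀ g : ℝ → ℝ, IntervalIntegrable g volume 0 1 →
      (∀ α ∈ Icc 0 δ, c ≤ g α) → (∀ α ∈ Icc δ 1, -M ≤ g α) →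
      0 < ∫ α in (0:ℝ)..1, r ^ α * g α := by
  set η := δ / 2 with hηδ
  have hη : 0 < η := half_pos hδ
  have hsmall : ∀ᶠ r in 𝓝[>] (0:ℝ), M * r ^ η < η * c := by
    have h := ((continuousAt_rpow_const 0 η (Or.inr hη.le)).tendsto.const_mul M).mono_left
      (nhdsWithin_le_nhds (s := Ioi 0))
    rw [zero_rpow hη.ne', mul_zero] at h
    exact h.eventually (gt_mem_nhds (by positivity))
  filter_upwards [hsmall, Ioo_mem_nhdsGT one_pos] with r hr ⟨hr0, hr1⟩ g hg hgc hgM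
  have hF : IntervalIntegrable (fun α => r ^ α * g α) volume 0 1 :=
    hg.continuousOn_mul (continuous_const_rpow hr0.ne').continuousOn
  have hFi : ∀ {a b}, a ∈ Icc (0:ℝ) 1 → b ∈ Icc (0:ℝ) 1 →
      IntervalIntegrable (fun α => r ^ α * g α) volume a b := fun ha hb =>
    hF.mono_set (uIcc_subset_uIcc (by rwa [uIcc_of_le zero_le_one])
      (by rwa [uIcc_of_le zero_le_one]))
  have hηI : η ∈ Icc (0:ℝ) 1 := ⟨hη.le, by linarith⟩
  have hhead : η * (r ^ η * c) ≤ ∫ α in (0:ℝ)..η, r ^ α * g α := by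
    have := intervalIntegral.integral_mono_on hη.le (intervalIntegrable_const (c := r ^ η * c))
      (hFi ⟨le_rfl, zero_le_one⟩ hηI) fun α hα => ?_
    · rwa [intervalIntegral.integral_const, smul_eq_mul, sub_zero] at this
    exact mul_le_mul (rpow_le_rpow_of_exponent_ge hr0 hr1.le hα.2)
      (hgc α ⟨hα.1, by linarith [hα.2]⟩) hc.le (rpow_nonneg hr0.le α)
  have htail : (1 - η) * -(M * r ^ δ) ≤ ∫ α in η..1, r ^ α * g α := by
    have := intervalIntegral.integral_mono_on hηI.2
      (intervalIntegrable_const (c := -(M * r ^ δ))) (hFi hηI ⟨zero_le_one, le_rfl⟩) fun α hα => ?_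
    · rwa [intervalIntegral.integral_const, smul_eq_mul] at this
    rcases le_total α δ with hαδ | hδα
    · have : 0 ≤ r ^ α * g α :=
        mul_nonneg (rpow_nonneg hr0.le α) (hc.le.trans (hgc α ⟨hη.le.trans hα.1, hαδ⟩))
      linarith [mul_nonneg hM (rpow_nonneg hr0.le δ)]
    · have h1 : r ^ α ≤ r ^ δ := rpow_le_rpow_of_exponent_ge hr0 hr1.le hδα
      have h2 := hgM α ⟨hδα, hα.2⟩
      nlinarith [rpow_nonneg hr0.le α]
  have hsq : r ^ δ = r ^ η * r ^ η := by rw [← rpow_add hr0, hηδ, add_halves]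
  have hrη : 0 < r ^ η := rpow_pos_of_pos hr0 η
  rw [← intervalIntegral.integral_add_adjacent_intervals (hFi ⟨le_rfl, zero_le_one⟩ hηI)
    (hFi hηI ⟨zero_le_one, le_rfl⟩)]
  rw [hsq] at htail
  nlinarith [mul_lt_mul_of_pos_right hr hrη, mul_nonneg hM (mul_nonneg hrη.le hrη.le)]

theorem stmt_1_general (μ : ℝ → ℝ) (hc : ContinuousOn μ (Set.Icc 0 1))
    (h0 : 0 < μ 0) :
    ∃ r₀ ∈ Set.Ioo (0:ℝ) 1, ∀ z : ℂ, z ≠ 0 → ‖z‖ < r₀ → |z.arg| < π →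
      0 < (z * w μ z).re := by
  obtain ⟨M, hμM⟩ := isCompact_Icc.exists_bound_of_continuousOn hc
  have hM : 0 ≤ M := (norm_nonneg _).trans (hμM 0 ⟨le_rfl, zero_le_one⟩)
  obtain ⟨δ, hδ, hμδ⟩ := exists_forall_Icc_lt_of_continuousWithinAt one_pos
    (hc 0 ⟨le_rfl, zero_le_one⟩) (half_lt_self h0)
  have hδ' : 0 < min δ (1 / 3) := lt_min hδ (by norm_num)
  obtain ⟨r₀, hr₀, hpos⟩ := mem_nhdsGT_iff_exists_Ioo_subset.1
    (eventually_forall_integral_rpow_mul_pos hδ' ((min_le_right _ _).trans (by norm_num))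
      (by positivity : 0 < μ 0 / 4) hM)
  refine ⟨min r₀ (1 / 2), ⟨lt_min hr₀ (by norm_num), (min_le_right _ _).trans_lt (by norm_num)⟩,
    fun z hz hzr _ => ?_⟩
  rw [re_mul_w hc hz]
  refine hpos ⟨norm_pos_iff.2 hz, hzr.trans_le (min_le_left _ _)⟩ _ ?_ (fun α hα => ?_)
    (fun α hα => ?_)
  · refine ContinuousOn.intervalIntegrable ?_
    rw [uIcc_of_le zero_le_one]
    exact (continuous_cos.comp (continuous_const_mul _)).continuousOn.mul hc
  · have hcos : 1 / 2 ≤ cos (z.arg * α) := by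
      refine one_half_le_cos_of_abs_le ?_
      rw [abs_mul, abs_of_nonneg hα.1]
      linarith [mul_le_mul (Complex.abs_arg_le_pi z) (hα.2.trans (min_le_right _ _)) hα.1
        pi_pos.le]
    nlinarith [hμδ α ⟨hα.1, hα.2.trans (min_le_left _ _)⟩]
  · have hμα := abs_le.1 (hμM α ⟨hδ'.le.trans hα.1, hα.2⟩)
    nlinarith [neg_one_le_cos (z.arg * α), cos_le_one (z.arg * α)]

theorem stmt_1 (μ : ℝ → ℝ) (hc : ContinuousOn μ (Set.Icc 0 1))
    (hnn : ∀ α ∈ Set.Icc (0:ℝ) 1, 0 ≤ μ α) (h0 : 0 < μ 0) :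
    ∃ r₀ ∈ Set.Ioo (0:ℝ) 1, ∀ z : ℂ, z ≠ 0 → ‖z‖ < r₀ → |z.arg| < π →
      0 < (z * w μ z).re :=
  stmt_1_general μ hc h0
end

section
/- Let μ : [0,1] → ℝ be continuous and nonnegative with μ(1) > 0, let θ ∈ (π/2, π) and r₀ ∈ (0,1). Then there exists c' > 0, depending only on μ, θ and r₀, such that for every z = r·e^{iφ} with r ≥ r₀ and φ ∈ [π/2, θ], one has |Im(z·w(z))| ≥ c' · |Re(z·w(z))|. -/
open Real MeasureTheory

/-!
With `z = r e^{iφ}` one has `z w(z) = ∫₀¹ r^α μ(α) e^{iαφ} dα`, so `Im (z w(z))` and `Re (z w(z))`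
are the integrals of `r^α μ(α)` against `sin(αφ)` and `cos(αφ)`, where `0 ≤ αφ ≤ θ < π`.
The pointwise bound `cos x ≥ (cot θ) sin x` on `[0, θ]` bounds `Re` from below by a multiple of
`Im`. From above, `cos ≤ 1`, while for `α ≥ 1/2` the angle `αφ` lies in `[π/4, θ]`, where `sin` is
bounded away from `0`; so it suffices that `∫₀¹ r^α μ` is controlled by `∫_{1/2}^1 r^α μ`
uniformly in `r ≥ r₀`. This follows from `r₀ r^α ≤ r^β` for `0 ≤ α ≤ β ≤ 1`, since `μ(1) > 0`
makes `∫_{1/2}^1 μ` positive.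
-/

open Set

lemma mul_rpow_le_rpow_of_exponent_le {r₀ r α β : ℝ} (hr₀ : 0 < r₀) (hr₀₁ : r₀ ≤ 1)
    (hr : r₀ ≤ r) (hα : 0 ≤ α) (hαβ : α ≤ β) (hβ : β ≤ 1) : r₀ * r ^ α ≤ r ^ β := by
  have hr0 : 0 < r := hr₀.trans_le hr
  rcases le_total 1 r with h | h
  · calc r₀ * r ^ α ≤ r ^ α := mul_le_of_le_one_left (by positivity) hr₀₁
      _ ≤ r ^ β := rpow_le_rpow_of_exponent_le h hαβ
  · calc r₀ * r ^ α ≤ r := (mul_le_of_le_one_right hr₀.le (rpow_le_one hr0.le h hα)).trans hr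
      _ = r ^ (1 : ℝ) := (rpow_one r).symm
      _ ≤ r ^ β := rpow_le_rpow_of_exponent_ge hr0 h hβ

lemma cos_mul_sin_le_sin_mul_cos {x θ : ℝ} (hx : x ≤ θ) (hθ : θ ≤ x + π) :
    cos θ * sin x ≤ sin θ * cos x := by
  have h := sin_nonneg_of_nonneg_of_le_pi (sub_nonneg.2 hx) (by linarith)
  rw [sin_sub] at h
  linarith

lemma min_sin_le_sin {a b x : ℝ} (ha : 0 ≤ a) (hb : b ≤ π) (hx : x ∈ Icc a b) :
    min (sin a) (sin b) ≤ sin x :=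
  strictConcaveOn_sin_Icc.concaveOn.min_le_of_mem_Icc ⟨ha, by linarith [hx.1, hx.2]⟩
    ⟨by linarith [hx.1, hx.2], hb⟩ hx

lemma abs_le_sub_mul_abs_of_mul_le_of_le_mul {a b k l : ℝ} (hk : k ≤ 0) (hl : 0 ≤ l)
    (hka : k * b ≤ a) (hal : a ≤ l * b) : |a| ≤ (l - k) * |b| := by
  rcases le_total 0 b with hb | hb
  · rw [abs_of_nonneg hb, abs_le]
    constructor <;> nlinarith
  · rw [abs_of_nonpos hb, abs_le]
    constructor <;> nlinarith

lemma ofReal_mul_exp_cpow_ofReal {r φ : ℝ} (hr : 0 < r) (hφ : φ ∈ Ioc (-π) π) (s : ℝ) :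
    ((r : ℂ) * Complex.exp (φ * Complex.I)) ^ (s : ℂ) =
      (r ^ s) • Complex.exp ((s * φ : ℝ) * Complex.I) := by
  have hlog : Complex.log (r * Complex.exp (φ * Complex.I)) = (Real.log r : ℂ) + φ * Complex.I := by
    rw [Complex.log_ofReal_mul hr (Complex.exp_ne_zero _), Complex.log_exp] <;>
      simp [hφ.1, hφ.2]
  rw [Complex.cpow_def_of_ne_zero (mul_ne_zero (by exact_mod_cast hr.ne') (Complex.exp_ne_zero _)),
    hlog, rpow_def_of_pos hr, Complex.real_smul, Complex.ofReal_exp, ← Complex.exp_add]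
  push_cast
  ring_nf

section

variable {μ : ℝ → ℝ} {r φ : ℝ}

lemma IntervalIntegrable.const_rpow_mul {a b : ℝ} (hμ : IntervalIntegrable μ volume a b)
    (hr : 0 < r) : IntervalIntegrable (fun α => r ^ α * μ α) volume a b :=
  hμ.continuousOn_mul (continuous_const_rpow hr.ne').continuousOn

lemma mul_w_eq_integral_s2 (hr : 0 < r) (hφ : φ ∈ Ioc (-π) π) :
    (r * Complex.exp (φ * Complex.I)) * w μ (r * Complex.exp (φ * Complex.I)) =
      ∫ α in (0 : ℝ)..1, (r ^ α * μ α) • Complex.exp ((α * φ : ℝ) * Complex.I) := by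
  have hr' : (r : ℂ) ≠ 0 := by exact_mod_cast hr.ne'
  have hz : (r : ℂ) * Complex.exp (φ * Complex.I) ≠ 0 := mul_ne_zero hr' (Complex.exp_ne_zero _)
  rw [w, ← intervalIntegral.integral_const_mul]
  refine intervalIntegral.integral_congr fun α _ => ?_
  rw [Complex.cpow_sub _ _ hz, Complex.cpow_one, ofReal_mul_exp_cpow_ofReal hr hφ,
    Complex.real_smul, Complex.real_smul]
  field_simp
  push_cast
  ring

lemma re_mul_w_s2 (hμ : IntervalIntegrable μ volume 0 1) (hr : 0 < r) (hφ : φ ∈ Ioc (-π) π) :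
    ((r * Complex.exp (φ * Complex.I)) * w μ (r * Complex.exp (φ * Complex.I))).re =
      ∫ α in (0 : ℝ)..1, r ^ α * μ α * cos (α * φ) := by
  rw [mul_w_eq_integral_s2 hr hφ]
  refine (intervalIntegral.intervalIntegral_re ((hμ.const_rpow_mul hr).smul_continuousOn
    (g := fun α : ℝ => Complex.exp ((α * φ : ℝ) * Complex.I)) (by fun_prop))).symm.trans ?_
  simp only [RCLike.re_to_complex, Complex.smul_re, Complex.exp_ofReal_mul_I_re, smul_eq_mul]

lemma im_mul_w (hμ : IntervalIntegrable μ volume 0 1) (hr : 0 < r) (hφ : φ ∈ Ioc (-π) π) :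
    ((r * Complex.exp (φ * Complex.I)) * w μ (r * Complex.exp (φ * Complex.I))).im =
      ∫ α in (0 : ℝ)..1, r ^ α * μ α * sin (α * φ) := by
  rw [mul_w_eq_integral_s2 hr hφ]
  refine (intervalIntegral.intervalIntegral_im ((hμ.const_rpow_mul hr).smul_continuousOn
    (g := fun α : ℝ => Complex.exp ((α * φ : ℝ) * Complex.I)) (by fun_prop))).symm.trans ?_
  simp only [RCLike.im_to_complex, Complex.smul_im, Complex.exp_ofReal_mul_I_im, smul_eq_mul]

lemma integral_rpow_mul_cos_le (hμ : IntervalIntegrable μ volume 0 1)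
    (hnn : ∀ α ∈ Icc (0 : ℝ) 1, 0 ≤ μ α) (hr : 0 < r) :
    ∫ α in (0 : ℝ)..1, r ^ α * μ α * cos (α * φ) ≤ ∫ α in (0 : ℝ)..1, r ^ α * μ α := by
  refine intervalIntegral.integral_mono_on zero_le_one
    ((hμ.const_rpow_mul hr).mul_continuousOn (by fun_prop)) (hμ.const_rpow_mul hr) fun α hα => ?_
  exact mul_le_of_le_one_right (mul_nonneg (by positivity) (hnn α hα)) (cos_le_one _)

lemma div_mul_integral_sin_le_integral_cos {θ : ℝ} (hθ : θ ∈ Ioo 0 π) (hφ : φ ∈ Icc 0 θ)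
    (hμ : IntervalIntegrable μ volume 0 1) (hnn : ∀ α ∈ Icc (0 : ℝ) 1, 0 ≤ μ α) (hr : 0 < r) :
    cos θ / sin θ * ∫ α in (0 : ℝ)..1, r ^ α * μ α * sin (α * φ) ≤
      ∫ α in (0 : ℝ)..1, r ^ α * μ α * cos (α * φ) := by
  have hsin : 0 < sin θ := sin_pos_of_pos_of_lt_pi hθ.1 hθ.2
  rw [← intervalIntegral.integral_const_mul]
  refine intervalIntegral.integral_mono_on zero_le_one
    (((hμ.const_rpow_mul hr).mul_continuousOn (by fun_prop)).const_mul _)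
    ((hμ.const_rpow_mul hr).mul_continuousOn (by fun_prop)) fun α hα => ?_
  have hαφ : α * φ ≤ θ := (mul_le_of_le_one_left hφ.1 hα.2).trans hφ.2
  have hcos : cos θ / sin θ * sin (α * φ) ≤ cos (α * φ) := by
    rw [div_mul_eq_mul_div, div_le_iff₀ hsin, mul_comm (cos (α * φ))]
    exact cos_mul_sin_le_sin_mul_cos hαφ (by nlinarith [hα.1, hφ.1, hθ.2])
  calc cos θ / sin θ * (r ^ α * μ α * sin (α * φ))
      = r ^ α * μ α * (cos θ / sin θ * sin (α * φ)) := by ring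
    _ ≤ r ^ α * μ α * cos (α * φ) :=
      mul_le_mul_of_nonneg_left hcos (mul_nonneg (by positivity) (hnn α hα))

lemma min_sin_mul_integral_le_integral_sin {θ : ℝ} (hθ : θ ≤ π) (hφ : φ ∈ Icc (π / 2) θ)
    (hμ : IntervalIntegrable μ volume 0 1) (hnn : ∀ α ∈ Icc (0 : ℝ) 1, 0 ≤ μ α) (hr : 0 < r) :
    min (sin (π / 4)) (sin θ) * ∫ α in (1 / 2 : ℝ)..1, r ^ α * μ α ≤
      ∫ α in (0 : ℝ)..1, r ^ α * μ α * sin (α * φ) := by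
  have hμ' : IntervalIntegrable μ volume (1 / 2) 1 := hμ.mono_set <| by
    rw [uIcc_of_le (by norm_num), uIcc_of_le zero_le_one]; exact Icc_subset_Icc (by norm_num) le_rfl
  rw [← intervalIntegral.integral_const_mul]
  calc ∫ α in (1 / 2 : ℝ)..1, min (sin (π / 4)) (sin θ) * (r ^ α * μ α)
      ≤ ∫ α in (1 / 2 : ℝ)..1, r ^ α * μ α * sin (α * φ) := by
        refine intervalIntegral.integral_mono_on (by norm_num)
          ((hμ'.const_rpow_mul hr).const_mul _)
          ((hμ'.const_rpow_mul hr).mul_continuousOn (by fun_prop)) fun α hα => ?_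
        have hαφ : α * φ ∈ Icc (π / 4) θ :=
          ⟨by nlinarith [hα.1, hφ.1, pi_pos], (mul_le_of_le_one_left (by linarith [hφ.1, pi_pos])
            hα.2).trans hφ.2⟩
        rw [mul_comm]
        exact mul_le_mul_of_nonneg_left (min_sin_le_sin (by positivity) hθ hαφ)
          (mul_nonneg (by positivity) (hnn α ⟨by linarith [hα.1], hα.2⟩))
    _ ≤ ∫ α in (0 : ℝ)..1, r ^ α * μ α * sin (α * φ) := by
        refine intervalIntegral.integral_mono_interval (by norm_num) (by norm_num) le_rfl ?_
          ((hμ.const_rpow_mul hr).mul_continuousOn (by fun_prop))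
        refine (ae_restrict_iff' measurableSet_Ioc).2 (Filter.Eventually.of_forall fun α hα => ?_)
        have hαφ : α * φ ≤ π := (mul_le_of_le_one_left (by linarith [hφ.1, pi_pos]) hα.2).trans
          (hφ.2.trans hθ)
        exact mul_nonneg (mul_nonneg (by positivity) (hnn α (Ioc_subset_Icc_self hα)))
          (sin_nonneg_of_nonneg_of_le_pi (by nlinarith [hα.1, hφ.1, pi_pos]) hαφ)

lemma integral_rpow_mul_le_mul_integral_half_one {r₀ : ℝ} (hr₀ : 0 < r₀) (hr₀₁ : r₀ ≤ 1)
    (hr : r₀ ≤ r) (hμ : IntervalIntegrable μ volume 0 1) (hnn : ∀ α ∈ Icc (0 : ℝ) 1, 0 ≤ μ α)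
    (hB : 0 < ∫ α in (1 / 2 : ℝ)..1, μ α) :
    ∫ α in (0 : ℝ)..1, r ^ α * μ α ≤
      (1 + (∫ α in (0 : ℝ)..1 / 2, μ α) / (r₀ ^ 2 * ∫ α in (1 / 2 : ℝ)..1, μ α)) *
        ∫ α in (1 / 2 : ℝ)..1, r ^ α * μ α := by
  have hr0 : 0 < r := hr₀.trans_le hr
  have hμ₁ : IntervalIntegrable μ volume 0 (1 / 2) := hμ.mono_set <| by
    rw [uIcc_of_le (by norm_num), uIcc_of_le zero_le_one]; exact Icc_subset_Icc le_rfl (by norm_num)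
  have hμ₂ : IntervalIntegrable μ volume (1 / 2) 1 := hμ.mono_set <| by
    rw [uIcc_of_le (by norm_num), uIcc_of_le zero_le_one]; exact Icc_subset_Icc (by norm_num) le_rfl
  set t := r ^ (1 / 2 : ℝ)
  set M := ∫ α in (0 : ℝ)..1 / 2, μ α
  set B := ∫ α in (1 / 2 : ℝ)..1, μ α
  set I₁ := ∫ α in (0 : ℝ)..1 / 2, r ^ α * μ α
  set I₂ := ∫ α in (1 / 2 : ℝ)..1, r ^ α * μ α
  have hM : 0 ≤ M :=
    intervalIntegral.integral_nonneg (by norm_num) fun α hα => hnn α ⟨hα.1, by linarith [hα.2]⟩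
  have hI₁ : r₀ * I₁ ≤ t * M := by
    simp only [I₁, M, ← intervalIntegral.integral_const_mul]
    refine intervalIntegral.integral_mono_on (by norm_num) ((hμ₁.const_rpow_mul hr0).const_mul _)
      (hμ₁.const_mul _) fun α hα => ?_
    rw [← mul_assoc]
    exact mul_le_mul_of_nonneg_right (mul_rpow_le_rpow_of_exponent_le hr₀ hr₀₁ hr hα.1 hα.2
      (by norm_num)) (hnn α ⟨hα.1, by linarith [hα.2]⟩)
  have hI₂ : r₀ * t * B ≤ I₂ := by
    simp only [I₂, B, ← intervalIntegral.integral_const_mul]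
    refine intervalIntegral.integral_mono_on (by norm_num) (hμ₂.const_mul _)
      (hμ₂.const_rpow_mul hr0) fun α hα => ?_
    exact mul_le_mul_of_nonneg_right (mul_rpow_le_rpow_of_exponent_le hr₀ hr₀₁ hr (by norm_num)
      hα.1 hα.2) (hnn α ⟨by linarith [hα.1], hα.2⟩)
  have hsplit : ∫ α in (0 : ℝ)..1, r ^ α * μ α = I₁ + I₂ :=
    (intervalIntegral.integral_add_adjacent_intervals (hμ₁.const_rpow_mul hr0)
      (hμ₂.const_rpow_mul hr0)).symm
  have hI₁I₂ : I₁ ≤ M / (r₀ ^ 2 * B) * I₂ := by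
    rw [div_mul_eq_mul_div, le_div_iff₀ (by positivity)]
    calc I₁ * (r₀ ^ 2 * B) = r₀ * B * (r₀ * I₁) := by ring
      _ ≤ r₀ * B * (t * M) := mul_le_mul_of_nonneg_left hI₁ (by positivity)
      _ = M * (r₀ * t * B) := by ring
      _ ≤ M * I₂ := mul_le_mul_of_nonneg_left hI₂ hM
  rw [hsplit]
  linarith

end

theorem stmt_2 (μ : ℝ → ℝ) (hc : ContinuousOn μ (Set.Icc 0 1))
    (hnn : ∀ α ∈ Set.Icc (0:ℝ) 1, 0 ≤ μ α) (h1 : 0 < μ 1)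
    (θ r₀ : ℝ) (hθ : θ ∈ Set.Ioo (π / 2) π) (hr₀ : r₀ ∈ Set.Ioo (0:ℝ) 1) :
    ∃ c' > 0, ∀ r φ : ℝ, r₀ ≤ r → φ ∈ Set.Icc (π / 2) θ →
      c' * |(((r : ℂ) * Complex.exp ((φ : ℂ) * Complex.I)) *
              w μ ((r : ℂ) * Complex.exp ((φ : ℂ) * Complex.I))).re| ≤
        |(((r : ℂ) * Complex.exp ((φ : ℂ) * Complex.I)) *
              w μ ((r : ℂ) * Complex.exp ((φ : ℂ) * Complex.I))).im| := by
  obtain ⟨hθ₁, hθ₂⟩ := hθ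
  have hπ := pi_pos
  have hμ : IntervalIntegrable μ volume 0 1 := hc.intervalIntegrable_of_Icc zero_le_one
  have hB : 0 < ∫ α in (1 / 2 : ℝ)..1, μ α :=
    intervalIntegral.integral_pos (by norm_num) (hc.mono (Icc_subset_Icc (by norm_num) le_rfl))
      (fun α hα => hnn α ⟨by linarith [hα.1], hα.2⟩) ⟨1, ⟨by norm_num, le_rfl⟩, h1⟩
  have hM : 0 ≤ ∫ α in (0 : ℝ)..1 / 2, μ α :=
    intervalIntegral.integral_nonneg (by norm_num) fun α hα => hnn α ⟨hα.1, by linarith [hα.2]⟩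
  have hsin : 0 < sin θ := sin_pos_of_pos_of_lt_pi (by linarith) hθ₂
  have hm : 0 < min (sin (π / 4)) (sin θ) :=
    lt_min (sin_pos_of_pos_of_lt_pi (by positivity) (by linarith)) hsin
  set L := 1 + (∫ α in (0 : ℝ)..1 / 2, μ α) / (r₀ ^ 2 * ∫ α in (1 / 2 : ℝ)..1, μ α)
  set l := L / min (sin (π / 4)) (sin θ)
  set k := cos θ / sin θ
  have hk : k ≤ 0 := div_nonpos_of_nonpos_of_nonneg
    (cos_nonpos_of_pi_div_two_le_of_le hθ₁.le (by linarith)) hsin.le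
  have hl : 0 < l := by positivity
  refine ⟨(l - k)⁻¹, by simp only [gt_iff_lt, inv_pos]; linarith, fun r φ hr hφ => ?_⟩
  have hr0 : 0 < r := hr₀.1.trans_le hr
  have hφ' : φ ∈ Ioc (-π) π := ⟨by linarith [hφ.1], by linarith [hφ.2]⟩
  rw [inv_mul_le_iff₀ (by linarith), re_mul_w_s2 hμ hr0 hφ', im_mul_w hμ hr0 hφ']
  refine abs_le_sub_mul_abs_of_mul_le_of_le_mul hk hl.le (div_mul_integral_sin_le_integral_cos
    ⟨by linarith, hθ₂⟩ ⟨by linarith [hφ.1], hφ.2⟩ hμ hnn hr0) ?_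
  calc _ ≤ ∫ α in (0 : ℝ)..1, r ^ α * μ α := integral_rpow_mul_cos_le hμ hnn hr0
    _ ≤ L * ∫ α in (1 / 2 : ℝ)..1, r ^ α * μ α :=
      integral_rpow_mul_le_mul_integral_half_one hr₀.1 hr₀.2.le hr hμ hnn hB
    _ = l * (min (sin (π / 4)) (sin θ) * ∫ α in (1 / 2 : ℝ)..1, r ^ α * μ α) := by
      rw [← mul_assoc, div_mul_cancel₀ _ hm.ne']
    _ ≤ l * ∫ α in (0 : ℝ)..1, r ^ α * μ α * sin (α * φ) :=
      mul_le_mul_of_nonneg_left (min_sin_mul_integral_le_integral_sin hθ₂.le hφ hμ hnn hr0) hl.le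
end

section
/- Let μ : [0,1] → ℝ be continuous and nonnegative with μ(0) > 0 and μ(1) > 0, and let θ ∈ (π/2, π). Then there exists a constant c > 0, depending only on θ and μ, such that for every z ∈ Σ_θ one has |z·w(z)| ≥ c · ∫₀¹ |z|^α dα. -/
/-!
Rotating by `exp (-i arg z / 2)` turns `z * w z = ∫₀¹ z^α μ(α) dα` into an integral whose
integrand has real part `|z|^α cos (arg z * (α - 1/2)) μ(α) ≥ cos (arg z / 2) |z|^α μ(α)`, and
`cos (arg z / 2)` stays above `cos (θ / 2) > 0` on `Σ_θ`. It remains to compare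
`∫₀¹ r^α μ(α) dα` with `∫₀¹ r^α dα`: `μ ≥ m > 0` near both endpoints, and since `α ↦ r^α` is
monotone, a window of length `δ` at the appropriate endpoint carries at least the fraction `δ`
of `∫₀¹ r^α dα`.
-/

open Real MeasureTheory

open Set

theorem MonotoneOn.mul_integral_le_integral_right_end {f : ℝ → ℝ} (hf : MonotoneOn f (Icc 0 1))
    {δ : ℝ} (hδ : 0 < δ) (hδ1 : δ ≤ 1) :
    δ * ∫ α in (0:ℝ)..1, f α ≤ ∫ α in (1 - δ)..1, f α := by
  have hmaps : ∀ α ∈ Icc (0:ℝ) 1, δ * α + (1 - δ) ∈ Icc (0:ℝ) 1 := fun α hα =>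
    ⟨by nlinarith [hα.1], by nlinarith [hα.2]⟩
  have hg : MonotoneOn (fun α => f (δ * α + (1 - δ))) (Icc 0 1) := fun x hx y hy hxy =>
    hf (hmaps x hx) (hmaps y hy) (by nlinarith)
  have hle : ∫ α in (0:ℝ)..1, f α ≤ ∫ α in (0:ℝ)..1, f (δ * α + (1 - δ)) := by
    have hint {g : ℝ → ℝ} (h : MonotoneOn g (Icc 0 1)) : IntervalIntegrable g volume 0 1 :=
      MonotoneOn.intervalIntegrable (by rwa [uIcc_of_le zero_le_one])
    refine intervalIntegral.integral_mono_on zero_le_one (hint hf) (hint hg) fun α hα => ?_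
    exact hf hα (hmaps α hα) (by nlinarith [hα.2])
  calc δ * ∫ α in (0:ℝ)..1, f α ≤ δ * ∫ α in (0:ℝ)..1, f (δ * α + (1 - δ)) := by gcongr
    _ = ∫ α in (1 - δ)..1, f α := by
      rw [intervalIntegral.integral_comp_mul_add f hδ.ne', smul_eq_mul, mul_inv_cancel_left₀ hδ.ne']
      norm_num

theorem AntitoneOn.mul_integral_le_integral_left_end {f : ℝ → ℝ} (hf : AntitoneOn f (Icc 0 1))
    {δ : ℝ} (hδ : 0 < δ) (hδ1 : δ ≤ 1) :
    δ * ∫ α in (0:ℝ)..1, f α ≤ ∫ α in (0:ℝ)..δ, f α := by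
  have hg : MonotoneOn (fun α => f (1 - α)) (Icc 0 1) := fun x hx y hy hxy =>
    hf ⟨by linarith [hy.2], by linarith [hy.1]⟩ ⟨by linarith [hx.2], by linarith [hx.1]⟩
      (by linarith)
  simpa [intervalIntegral.integral_comp_sub_left] using hg.mul_integral_le_integral_right_end hδ hδ1

theorem mul_integral_le_integral_mul_of_le_on {f μ : ℝ → ℝ} {a b m : ℝ}
    (hf : ContinuousOn f (Icc 0 1)) (hμ : ContinuousOn μ (Icc 0 1))
    (hf0 : ∀ α ∈ Icc (0:ℝ) 1, 0 ≤ f α) (hμ0 : ∀ α ∈ Icc (0:ℝ) 1, 0 ≤ μ α)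
    (ha : 0 ≤ a) (hab : a ≤ b) (hb : b ≤ 1) (hm : ∀ α ∈ Icc a b, m ≤ μ α) :
    m * ∫ α in a..b, f α ≤ ∫ α in (0:ℝ)..1, f α * μ α := by
  have hsub : Icc a b ⊆ Icc 0 1 := Icc_subset_Icc ha hb
  have hfμ : ContinuousOn (fun α => f α * μ α) (Icc 0 1) := hf.mul hμ
  calc m * ∫ α in a..b, f α = ∫ α in a..b, f α * m := by
        rw [intervalIntegral.integral_mul_const, mul_comm]
    _ ≤ ∫ α in a..b, f α * μ α :=
        intervalIntegral.integral_mono_on hab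
          (((hf.mono hsub).mul continuousOn_const).intervalIntegrable_of_Icc hab)
          ((hfμ.mono hsub).intervalIntegrable_of_Icc hab) fun α hα =>
          mul_le_mul_of_nonneg_left (hm α hα) (hf0 α (hsub hα))
    _ ≤ ∫ α in (0:ℝ)..1, f α * μ α := by
        refine intervalIntegral.integral_mono_interval ha hab hb ?_
          (hfμ.intervalIntegrable_of_Icc zero_le_one)
        filter_upwards [ae_restrict_mem measurableSet_Ioc] with α hα
        exact mul_nonneg (hf0 α (Ioc_subset_Icc_self hα)) (hμ0 α (Ioc_subset_Icc_self hα))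

theorem mul_integral_rpow_le_integral_rpow_mul {μ : ℝ → ℝ} (hμ : ContinuousOn μ (Icc 0 1))
    (hμ0 : ∀ α ∈ Icc (0:ℝ) 1, 0 ≤ μ α) {m δ : ℝ} (hm : 0 ≤ m) (hδ : 0 < δ) (hδ1 : δ ≤ 1)
    (hleft : ∀ α ∈ Icc 0 δ, m ≤ μ α) (hright : ∀ α ∈ Icc (1 - δ) 1, m ≤ μ α) {r : ℝ} (hr : 0 < r) :
    m * δ * ∫ α in (0:ℝ)..1, r ^ α ≤ ∫ α in (0:ℝ)..1, r ^ α * μ α := by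
  have hcont : ContinuousOn (fun α : ℝ => r ^ α) (Icc 0 1) :=
    fun α _ => (continuousAt_const_rpow hr.ne').continuousWithinAt
  have hpos : ∀ α ∈ Icc (0:ℝ) 1, 0 ≤ r ^ α := fun α _ => rpow_nonneg hr.le α
  rw [mul_assoc]
  rcases le_total 1 r with hr1 | hr1
  · calc m * (δ * ∫ α in (0:ℝ)..1, r ^ α) ≤ m * ∫ α in (1 - δ)..1, r ^ α := by
          gcongr
          exact (monotone_rpow_of_base_ge_one hr1).monotoneOn _
            |>.mul_integral_le_integral_right_end hδ hδ1
      _ ≤ _ := mul_integral_le_integral_mul_of_le_on hcont hμ hpos hμ0 (by linarith) (by linarith)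
          le_rfl hright
  · calc m * (δ * ∫ α in (0:ℝ)..1, r ^ α) ≤ m * ∫ α in (0:ℝ)..δ, r ^ α := by
          gcongr
          exact (antitone_rpow_of_base_le_one hr hr1).antitoneOn _
            |>.mul_integral_le_integral_left_end hδ hδ1
      _ ≤ _ := mul_integral_le_integral_mul_of_le_on hcont hμ hpos hμ0 le_rfl hδ.le hδ1 hleft

theorem ContinuousWithinAt.exists_forall_le_of_lt {μ : ℝ → ℝ} {s : Set ℝ} {a m : ℝ}
    (h : ContinuousWithinAt μ s a) (hm : m < μ a) :
    ∃ δ > 0, ∀ α ∈ s, |α - a| ≤ δ → m ≤ μ α := by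
  have hev : ∀ᶠ α in nhdsWithin a s, m < μ α := h.eventually (lt_mem_nhds hm)
  obtain ⟨δ, hδ, hball⟩ := (Metric.nhds_basis_closedBall.inf_principal s).eventually_iff.mp hev
  exact ⟨δ, hδ, fun α hα hdist => (hball ⟨by rwa [Metric.mem_closedBall, Real.dist_eq], hα⟩).le⟩

theorem exists_pos_le_near_ends {μ : ℝ → ℝ} (hμ : ContinuousOn μ (Icc 0 1))
    (h0 : 0 < μ 0) (h1 : 0 < μ 1) :
    ∃ m > 0, ∃ δ > 0, δ ≤ 1 ∧ (∀ α ∈ Icc 0 δ, m ≤ μ α) ∧ ∀ α ∈ Icc (1 - δ) 1, m ≤ μ α := by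
  obtain ⟨m, hm, hmμ⟩ := exists_between (lt_min h0 h1)
  obtain ⟨δ₀, hδ₀, hμ₀⟩ := (hμ 0 (left_mem_Icc.2 zero_le_one)).exists_forall_le_of_lt
    (lt_min_iff.1 hmμ).1
  obtain ⟨δ₁, hδ₁, hμ₁⟩ := (hμ 1 (right_mem_Icc.2 zero_le_one)).exists_forall_le_of_lt
    (lt_min_iff.1 hmμ).2
  set δ := min (min δ₀ δ₁) 1
  have hδ₀' : δ ≤ δ₀ := (min_le_left _ _).trans (min_le_left _ _)
  have hδ₁' : δ ≤ δ₁ := (min_le_left _ _).trans (min_le_right _ _)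
  have hδ1 : δ ≤ 1 := min_le_right _ _
  refine ⟨m, hm, δ, by positivity, hδ1, fun α hα => ?_, fun α hα => ?_⟩
  · exact hμ₀ α ⟨hα.1, hα.2.trans hδ1⟩ (by rw [sub_zero, abs_of_nonneg hα.1]; linarith [hα.2])
  · refine hμ₁ α ⟨by linarith [hα.1], hα.2⟩ ?_
    rw [abs_sub_comm, abs_of_nonneg (by linarith [hα.2])]
    linarith [hα.1]

theorem mul_w_eq_integral_cpow (μ : ℝ → ℝ) {z : ℂ} (hz : z ≠ 0) :
    z * w μ z = ∫ α in (0:ℝ)..1, z ^ (α : ℂ) * (μ α : ℂ) := by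
  rw [w, ← intervalIntegral.integral_const_mul]
  congr 1 with α
  rw [Complex.cpow_sub _ _ hz, Complex.cpow_one, ← mul_assoc, mul_div_cancel₀ _ hz]

theorem re_exp_neg_arg_half_mul_cpow {z : ℂ} (hz : z ≠ 0) (α : ℝ) :
    (Complex.exp (↑(-(z.arg / 2)) * Complex.I) * z ^ (α : ℂ)).re
      = ‖z‖ ^ α * cos (z.arg * (α - 1 / 2)) := by
  set e := ↑(-(z.arg / 2)) * Complex.I + Complex.log z * α
  have hre : e.re = log ‖z‖ * α := by simp [e, Complex.log_re]
  have him : e.im = z.arg * (α - 1 / 2) := by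
    simp [e, Complex.log_im]
    ring
  rw [Complex.cpow_def_of_ne_zero hz, ← Complex.exp_add, Complex.exp_re, hre, him,
    rpow_def_of_pos (norm_pos_iff.2 hz)]

theorem cos_arg_half_mul_rpow_le_re {z : ℂ} (hz : z ≠ 0) {α : ℝ} (hα : α ∈ Icc (0:ℝ) 1) :
    cos (z.arg / 2) * ‖z‖ ^ α ≤ (Complex.exp (↑(-(z.arg / 2)) * Complex.I) * z ^ (α : ℂ)).re := by
  rw [re_exp_neg_arg_half_mul_cpow hz, mul_comm]
  gcongr
  rw [← cos_abs (z.arg / 2), ← cos_abs (z.arg * (α - 1 / 2))]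
  refine cos_le_cos_of_nonneg_of_le_pi (abs_nonneg _) ?_ ?_
  · rw [abs_div, abs_two]
    linarith [Complex.abs_arg_le_pi z, pi_pos]
  · rw [abs_mul, abs_div, abs_two, div_eq_mul_one_div]
    refine mul_le_mul_of_nonneg_left ?_ (abs_nonneg _)
    rw [abs_le]
    constructor <;> linarith [hα.1, hα.2]

theorem cos_arg_half_mul_integral_le_norm_mul_w {μ : ℝ → ℝ} (hμ : ContinuousOn μ (Icc 0 1))
    (hμ0 : ∀ α ∈ Icc (0:ℝ) 1, 0 ≤ μ α) {z : ℂ} (hz : z ≠ 0) :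
    cos (z.arg / 2) * ∫ α in (0:ℝ)..1, ‖z‖ ^ α * μ α ≤ ‖z * w μ z‖ := by
  set u := Complex.exp (↑(-(z.arg / 2)) * Complex.I)
  have hcpow : Continuous fun α : ℝ => z ^ (α : ℂ) :=
    Complex.continuous_ofReal.const_cpow (Or.inl hz)
  have hrpow : Continuous fun α : ℝ => ‖z‖ ^ α :=
    continuous_iff_continuousAt.2 fun _ => continuousAt_const_rpow (norm_ne_zero_iff.2 hz)
  have hμC : ContinuousOn (fun α : ℝ => (μ α : ℂ)) (Icc 0 1) :=
    Complex.continuous_ofReal.comp_continuousOn hμ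
  have hrot : ContinuousOn (fun α : ℝ => u * (z ^ (α : ℂ) * μ α)) (Icc 0 1) :=
    continuousOn_const.mul (hcpow.continuousOn.mul hμC)
  calc cos (z.arg / 2) * ∫ α in (0:ℝ)..1, ‖z‖ ^ α * μ α
      = ∫ α in (0:ℝ)..1, cos (z.arg / 2) * ‖z‖ ^ α * μ α := by
        rw [← intervalIntegral.integral_const_mul]
        simp only [mul_assoc]
    _ ≤ ∫ α in (0:ℝ)..1, (u * (z ^ (α : ℂ) * μ α)).re := by
        refine intervalIntegral.integral_mono_on zero_le_one
          ((continuousOn_const.mul hrpow.continuousOn).mul hμ |>.intervalIntegrable_of_Icc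
            zero_le_one)
          ((Complex.continuous_re.comp_continuousOn hrot).intervalIntegrable_of_Icc zero_le_one)
          fun α hα => ?_
        rw [← mul_assoc, Complex.re_mul_ofReal]
        exact mul_le_mul_of_nonneg_right (cos_arg_half_mul_rpow_le_re hz hα) (hμ0 α hα)
    _ = (u * (z * w μ z)).re := by
        rw [mul_w_eq_integral_cpow μ hz, ← intervalIntegral.integral_const_mul]
        exact Complex.reCLM.intervalIntegral_comp_comm (hrot.intervalIntegrable_of_Icc zero_le_one)
    _ ≤ ‖u * (z * w μ z)‖ := Complex.re_le_norm _
    _ = ‖z * w μ z‖ := by rw [norm_mul, Complex.norm_exp_ofReal_mul_I, one_mul]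

theorem stmt_5 (μ : ℝ → ℝ) (hc : ContinuousOn μ (Set.Icc 0 1))
    (hnn : ∀ α ∈ Set.Icc (0:ℝ) 1, 0 ≤ μ α) (h0 : 0 < μ 0) (h1 : 0 < μ 1)
    (θ : ℝ) (hθ : θ ∈ Set.Ioo (π / 2) π) :
    ∃ c > 0, ∀ z : ℂ, z ≠ 0 → |z.arg| < θ →
      c * ∫ α in (0:ℝ)..1, ‖z‖ ^ α ≤ ‖z * w μ z‖ := by
  obtain ⟨m, hm, δ, hδ, hδ1, hleft, hright⟩ := exists_pos_le_near_ends hc h0 h1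
  have hcos : 0 < cos (θ / 2) := cos_pos_of_mem_Ioo ⟨by linarith [hθ.1, pi_pos], by linarith [hθ.2]⟩
  refine ⟨cos (θ / 2) * (m * δ), by positivity, fun z hz harg => ?_⟩
  have hcos_arg : cos (θ / 2) ≤ cos (z.arg / 2) := by
    rw [← cos_abs (z.arg / 2)]
    refine cos_le_cos_of_nonneg_of_le_pi (abs_nonneg _) (by linarith [hθ.2, pi_pos]) ?_
    rw [abs_div, abs_two]
    linarith
  have hint : 0 ≤ ∫ α in (0:ℝ)..1, ‖z‖ ^ α :=
    intervalIntegral.integral_nonneg zero_le_one fun α _ => rpow_nonneg (norm_nonneg z) α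
  calc cos (θ / 2) * (m * δ) * ∫ α in (0:ℝ)..1, ‖z‖ ^ α
      = cos (θ / 2) * (m * δ * ∫ α in (0:ℝ)..1, ‖z‖ ^ α) := mul_assoc _ _ _
    _ ≤ cos (z.arg / 2) * ∫ α in (0:ℝ)..1, ‖z‖ ^ α * μ α :=
        mul_le_mul hcos_arg (mul_integral_rpow_le_integral_rpow_mul hc hnn hm.le hδ hδ1 hleft hright
          (norm_pos_iff.2 hz))
          (by positivity)
          (hcos.le.trans hcos_arg)
    _ ≤ ‖z * w μ z‖ := cos_arg_half_mul_integral_le_norm_mul_w hc hnn hz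
end

section
/- Let μ : [0,1] → ℝ be continuous and nonnegative with μ(0) > 0 and μ(1) > 0, and let θ ∈ (π/2, π). Then there exists a constant c > 0, depending only on θ and μ, such that for every z ∈ Σ_θ one has c · |z| · w(|z|) ≤ |z·w(z)| ≤ |z| · w(|z|), where w(|z|) = ∫₀¹ |z|^(α−1) μ(α) dα is a positive real number. -/
/-!
Write `z = ‖z‖ e^{iφ}` with `|φ| < θ < π`. The integrand of `w μ z` has modulus `‖z‖^(α-1) μ(α)`,
which gives the upper bound, and phase `(α - 1) φ`. Multiplying by `e^{iφ/2}` moves these phases to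
`(α - 1/2) φ ∈ [-θ/2, θ/2]`, so the real part of the rotated integrand is at least `cos (θ/2)`
times its modulus; integrating gives `cos (θ/2) · w(‖z‖) ≤ ‖w μ z‖`.
-/

open Real MeasureTheory

lemma Real.cos_le_cos_of_abs_le {x y : ℝ} (hxy : |x| ≤ y) (hy : y ≤ π) : cos y ≤ cos x := by
  rw [← cos_abs x]
  exact cos_le_cos_of_nonneg_of_le_pi (abs_nonneg x) hy hxy

lemma intervalIntegral.mul_integral_norm_le_norm_integral {𝕜 : Type*} [RCLike 𝕜] {f : ℝ → 𝕜}
    {a b c : ℝ} {ν : Measure ℝ} (hab : a ≤ b) (hf : IntervalIntegrable f ν a b)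
    (hsector : ∀ x ∈ Set.Icc a b, c * ‖f x‖ ≤ RCLike.re (f x)) :
    c * ∫ x in a..b, ‖f x‖ ∂ν ≤ ‖∫ x in a..b, f x ∂ν‖ :=
  calc c * ∫ x in a..b, ‖f x‖ ∂ν = ∫ x in a..b, c * ‖f x‖ ∂ν :=
        (intervalIntegral.integral_const_mul c _).symm
    _ ≤ ∫ x in a..b, RCLike.re (f x) ∂ν :=
        intervalIntegral.integral_mono_on hab (hf.norm.const_mul c) ⟨hf.1.re, hf.2.re⟩ hsector
    _ = RCLike.re (∫ x in a..b, f x ∂ν) := intervalIntegral_re hf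
    _ ≤ ‖∫ x in a..b, f x ∂ν‖ := RCLike.re_le_norm _

lemma Complex.re_exp_mul_I_mul_cpow_ofReal (x : ℂ) (t y : ℝ) :
    (exp (t * I) * x ^ (y : ℂ)).re = ‖x‖ ^ y * Real.cos (t + arg x * y) := by
  rw [cpow_ofReal, exp_mul_I, ← ofReal_cos, ← ofReal_sin, Real.cos_add]
  simp only [mul_re, add_re, add_im, ofReal_re, ofReal_im, mul_im, I_re, I_im]
  ring

lemma norm_cpow_sub_one_mul_ofReal (z : ℂ) (α : ℝ) {m : ℝ} (hm : 0 ≤ m) :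
    ‖z ^ ((α : ℂ) - 1) * (m : ℂ)‖ = ‖z‖ ^ (α - 1) * m := by
  rw [norm_mul, ← Complex.ofReal_one, ← Complex.ofReal_sub, Complex.norm_cpow_real,
    Complex.norm_real, Real.norm_of_nonneg hm]

section

variable {μ : ℝ → ℝ}

lemma integral_norm_integrand_w (hnn : ∀ α ∈ Set.Icc (0:ℝ) 1, 0 ≤ μ α) (z : ℂ) :
    ∫ α in (0:ℝ)..1, ‖z ^ ((α : ℂ) - 1) * (μ α : ℂ)‖ = ∫ α in (0:ℝ)..1, ‖z‖ ^ (α - 1) * μ α :=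
  intervalIntegral.integral_congr fun α hα =>
    norm_cpow_sub_one_mul_ofReal z α (hnn α (by rwa [Set.uIcc_of_le zero_le_one] at hα))

lemma norm_w_le (hnn : ∀ α ∈ Set.Icc (0:ℝ) 1, 0 ≤ μ α) (z : ℂ) :
    ‖w μ z‖ ≤ ∫ α in (0:ℝ)..1, ‖z‖ ^ (α - 1) * μ α :=
  (intervalIntegral.norm_integral_le_integral_norm zero_le_one).trans_eq
    (integral_norm_integrand_w hnn z)

lemma intervalIntegrable_integrand_w (hc : ContinuousOn μ (Set.Icc 0 1)) {z : ℂ} (hz : z ≠ 0) :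
    IntervalIntegrable (fun α : ℝ => z ^ ((α : ℂ) - 1) * (μ α : ℂ)) volume 0 1 :=
  (((Complex.continuous_ofReal.sub continuous_const).const_cpow (Or.inl hz)).continuousOn.mul
    (Complex.continuous_ofReal.comp_continuousOn hc)).intervalIntegrable_of_Icc zero_le_one

lemma cos_half_mul_integral_le_norm_w (hc : ContinuousOn μ (Set.Icc 0 1))
    (hnn : ∀ α ∈ Set.Icc (0:ℝ) 1, 0 ≤ μ α) {θ : ℝ} (hθ : θ ≤ π) {z : ℂ} (hz : z ≠ 0)
    (harg : |z.arg| ≤ θ) :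
    cos (θ / 2) * ∫ α in (0:ℝ)..1, ‖z‖ ^ (α - 1) * μ α ≤ ‖w μ z‖ := by
  set e : ℂ := Complex.exp ((z.arg / 2 : ℝ) * Complex.I)
  have he : ‖e‖ = 1 := Complex.norm_exp_ofReal_mul_I _
  have hsector : ∀ α ∈ Set.Icc (0:ℝ) 1, cos (θ / 2) * ‖e * (z ^ ((α : ℂ) - 1) * (μ α : ℂ))‖ ≤
      (e * (z ^ ((α : ℂ) - 1) * (μ α : ℂ))).re := by
    intro α hα
    have hphase : |(α - 1 / 2) * z.arg| ≤ θ / 2 := by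
      have hα' : |α - 1 / 2| ≤ 1 / 2 := abs_le.mpr ⟨by linarith [hα.1], by linarith [hα.2]⟩
      calc |(α - 1 / 2) * z.arg| ≤ 1 / 2 * θ :=
            (abs_mul _ _).trans_le (mul_le_mul hα' harg (abs_nonneg _) (by norm_num))
        _ = θ / 2 := by ring
    have hre : (e * (z ^ ((α : ℂ) - 1) * (μ α : ℂ))).re =
        ‖z‖ ^ (α - 1) * cos ((α - 1 / 2) * z.arg) * μ α := by
      rw [← mul_assoc, Complex.re_mul_ofReal, ← Complex.ofReal_one, ← Complex.ofReal_sub,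
        Complex.re_exp_mul_I_mul_cpow_ofReal]
      ring_nf
    rw [norm_mul, he, one_mul, norm_cpow_sub_one_mul_ofReal z α (hnn α hα), hre]
    calc cos (θ / 2) * (‖z‖ ^ (α - 1) * μ α)
        ≤ cos ((α - 1 / 2) * z.arg) * (‖z‖ ^ (α - 1) * μ α) :=
          mul_le_mul_of_nonneg_right (cos_le_cos_of_abs_le hphase (by linarith [abs_nonneg z.arg]))
            (mul_nonneg (rpow_nonneg (norm_nonneg z) _) (hnn α hα))
      _ = ‖z‖ ^ (α - 1) * cos ((α - 1 / 2) * z.arg) * μ α := by ring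
  have := intervalIntegral.mul_integral_norm_le_norm_integral zero_le_one
    ((intervalIntegrable_integrand_w hc hz).const_mul e) hsector
  simpa only [w, norm_mul e, he, one_mul, integral_norm_integrand_w hnn,
    intervalIntegral.integral_const_mul] using this

lemma integral_rpow_sub_one_mul_pos (hc : ContinuousOn μ (Set.Icc 0 1))
    (hnn : ∀ α ∈ Set.Icc (0:ℝ) 1, 0 ≤ μ α) (h0 : 0 < μ 0) {r : ℝ} (hr : 0 < r) :
    0 < ∫ α in (0:ℝ)..1, r ^ (α - 1) * μ α :=
  intervalIntegral.integral_pos zero_lt_one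
    ((continuous_const.rpow (continuous_id.sub continuous_const)
      fun _ => Or.inl hr.ne').continuousOn.mul hc)
    (fun α hα => mul_nonneg (rpow_nonneg hr.le _) (hnn α (Set.Ioc_subset_Icc_self hα)))
    ⟨0, Set.left_mem_Icc.mpr zero_le_one, mul_pos (rpow_pos_of_pos hr _) h0⟩

end

theorem stmt_6_general (μ : ℝ → ℝ) (hc : ContinuousOn μ (Set.Icc 0 1))
    (hnn : ∀ α ∈ Set.Icc (0:ℝ) 1, 0 ≤ μ α) (h0 : 0 < μ 0)
    (θ : ℝ) (hθ : θ ∈ Set.Ioo (π / 2) π) :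
    ∃ c > 0, ∀ z : ℂ, z ≠ 0 → |z.arg| < θ →
      (0 < ∫ α in (0:ℝ)..1, ‖z‖ ^ (α - 1) * μ α) ∧
      c * (‖z‖ * ∫ α in (0:ℝ)..1, ‖z‖ ^ (α - 1) * μ α) ≤
        ‖z * w μ z‖ ∧
      ‖z * w μ z‖ ≤
        ‖z‖ * ∫ α in (0:ℝ)..1, ‖z‖ ^ (α - 1) * μ α := by
  obtain ⟨hθ₀, hθπ⟩ := hθ
  refine ⟨cos (θ / 2), cos_pos_of_mem_Ioo ⟨by linarith [pi_pos], by linarith⟩,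
    fun z hz harg => ⟨integral_rpow_sub_one_mul_pos hc hnn h0 (norm_pos_iff.mpr hz), ?_, ?_⟩⟩
  · rw [norm_mul, mul_left_comm]
    exact mul_le_mul_of_nonneg_left
      (cos_half_mul_integral_le_norm_w hc hnn hθπ.le hz harg.le) (norm_nonneg z)
  · rw [norm_mul]
    exact mul_le_mul_of_nonneg_left (norm_w_le hnn z) (norm_nonneg z)

theorem stmt_6 (μ : ℝ → ℝ) (hc : ContinuousOn μ (Set.Icc 0 1))
    (hnn : ∀ α ∈ Set.Icc (0:ℝ) 1, 0 ≤ μ α) (h0 : 0 < μ 0) (h1 : 0 < μ 1)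
    (θ : ℝ) (hθ : θ ∈ Set.Ioo (π / 2) π) :
    ∃ c > 0, ∀ z : ℂ, z ≠ 0 → |z.arg| < θ →
      (0 < ∫ α in (0:ℝ)..1, ‖z‖ ^ (α - 1) * μ α) ∧
      c * (‖z‖ * ∫ α in (0:ℝ)..1, ‖z‖ ^ (α - 1) * μ α) ≤
        ‖z * w μ z‖ ∧
      ‖z * w μ z‖ ≤
        ‖z‖ * ∫ α in (0:ℝ)..1, ‖z‖ ^ (α - 1) * μ α :=
  stmt_6_general μ hc hnn h0 θ hθ
end

section
/- Let μ : [0,1] → ℝ be continuous and nonnegative with μ(0) > 0 and μ(1) > 0. Then there exists a constant c > 0 such that for every real r > 0, one has c · ∫₀¹ r^α dα ≤ ∫₀¹ r^α μ(α) dα ≤ ‖μ‖_{C[0,1]} · ∫₀¹ r^α dα. -/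
open Real MeasureTheory

/-!
Since `α ↦ r ^ α` is monotone, its average over `[0, 1]` is at most its average over `[1 - δ, 1]`
(if `r ≥ 1`) or over `[0, δ]` (if `r ≤ 1`). By continuity `μ` is bounded below by some `ε > 0`
on both of these end intervals, so `∫ r ^ α μ(α) ≥ ε δ ∫ r ^ α`. The upper bound is `μ ≤ sup μ`.
-/

open Set intervalIntegral Topology

theorem AntitoneOn.mul_integral_le_mul_integral_initial {f : ℝ → ℝ} {a b c : ℝ}
    (hf : AntitoneOn f (Icc a b)) (hac : a ≤ c) (hcb : c ≤ b) :
    (c - a) * ∫ x in a..b, f x ≤ (b - a) * ∫ x in a..c, f x := by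
  have hfi : ∀ s t, a ≤ s → s ≤ t → t ≤ b → IntervalIntegrable f volume s t :=
    fun s t has hst htb =>
      (hf.mono (by rw [uIcc_of_le hst]; exact Icc_subset_Icc has htb)).intervalIntegrable
  have hc : c ∈ Icc a b := ⟨hac, hcb⟩
  have hleft : (c - a) * f c ≤ ∫ x in a..c, f x := by
    simpa using integral_mono_on hac intervalIntegrable_const (hfi a c le_rfl hac hcb)
      fun x hx => hf ⟨hx.1, hx.2.trans hcb⟩ hc hx.2
  have hright : ∫ x in c..b, f x ≤ (b - c) * f c := by
    simpa using integral_mono_on hcb (hfi c b hac hcb le_rfl) intervalIntegrable_const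
      fun x hx => hf hc ⟨hac.trans hx.1, hx.2⟩ hx.1
  rw [← integral_add_adjacent_intervals (hfi a c le_rfl hac hcb) (hfi c b hac hcb le_rfl)]
  nlinarith [mul_le_mul_of_nonneg_left hright (sub_nonneg.2 hac),
    mul_le_mul_of_nonneg_left hleft (sub_nonneg.2 hcb)]

theorem MonotoneOn.mul_integral_le_mul_integral_final {f : ℝ → ℝ} {a b c : ℝ}
    (hf : MonotoneOn f (Icc a b)) (hac : a ≤ c) (hcb : c ≤ b) :
    (b - c) * ∫ x in a..b, f x ≤ (b - a) * ∫ x in c..b, f x := by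
  have hneg : AntitoneOn (fun x => f (-x)) (Icc (-b) (-a)) := fun x hx y hy hxy =>
    hf ⟨by linarith [hy.2], by linarith [hy.1]⟩ ⟨by linarith [hx.2], by linarith [hx.1]⟩
      (neg_le_neg hxy)
  have := hneg.mul_integral_le_mul_integral_initial (c := -c) (by linarith) (by linarith)
  simpa only [integral_comp_neg, neg_neg, neg_sub_neg] using this

theorem mul_integral_le_integral_mul_of_le_on_s7 {f g : ℝ → ℝ} {a b c d ε : ℝ}
    (hac : a ≤ c) (hcd : c ≤ d) (hdb : d ≤ b) (hf : IntervalIntegrable f volume c d)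
    (hfg : IntervalIntegrable (fun x => f x * g x) volume a b)
    (hfg0 : ∀ x ∈ Icc a b, 0 ≤ f x * g x) (hf0 : ∀ x ∈ Icc c d, 0 ≤ f x)
    (hε : ∀ x ∈ Icc c d, ε ≤ g x) :
    ε * ∫ x in c..d, f x ≤ ∫ x in a..b, f x * g x := by
  have hcd_sub : uIcc c d ⊆ uIcc a b := by
    rw [uIcc_of_le hcd, uIcc_of_le (hac.trans (hcd.trans hdb))]; exact Icc_subset_Icc hac hdb
  calc ε * ∫ x in c..d, f x = ∫ x in c..d, ε * f x := (intervalIntegral.integral_const_mul _ _).symm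
    _ ≤ ∫ x in c..d, f x * g x :=
        integral_mono_on hcd (hf.const_mul ε) (hfg.mono_set hcd_sub) fun x hx => by
          rw [mul_comm]; exact mul_le_mul_of_nonneg_left (hε x hx) (hf0 x hx)
    _ ≤ ∫ x in a..b, f x * g x :=
        integral_mono_interval hac hcd hdb
          ((ae_restrict_mem measurableSet_Ioc).mono fun x hx => hfg0 x (Ioc_subset_Icc_self hx)) hfg

theorem mul_integral_le_integral_mul_of_le_near_endpoints {f g : ℝ → ℝ} {a b δ ε : ℝ}
    (hf : MonotoneOn f (Icc a b) ∨ AntitoneOn f (Icc a b)) (hf0 : ∀ x ∈ Icc a b, 0 ≤ f x)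
    (hg : ContinuousOn g (Icc a b)) (hg0 : ∀ x ∈ Icc a b, 0 ≤ g x)
    (hδ : 0 ≤ δ) (hδb : a + δ ≤ b) (hε0 : 0 ≤ ε)
    (hε : ∀ x ∈ Icc a (a + δ) ∪ Icc (b - δ) b, ε ≤ g x) :
    δ * ε * ∫ x in a..b, f x ≤ (b - a) * ∫ x in a..b, f x * g x := by
  have hab : a ≤ b := by linarith
  have hfi : ∀ s t, a ≤ s → s ≤ t → t ≤ b → IntervalIntegrable f volume s t :=
    fun s t has hst htb =>
      have hsub : uIcc s t ⊆ Icc a b := by rw [uIcc_of_le hst]; exact Icc_subset_Icc has htb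
      hf.elim (fun h => (h.mono hsub).intervalIntegrable) (fun h => (h.mono hsub).intervalIntegrable)
  have hfg : IntervalIntegrable (fun x => f x * g x) volume a b :=
    (hfi a b le_rfl hab le_rfl).mul_continuousOn (by rwa [uIcc_of_le hab])
  have hfg0 : ∀ x ∈ Icc a b, 0 ≤ f x * g x := fun x hx => mul_nonneg (hf0 x hx) (hg0 x hx)
  have reduce : ∀ c d, a ≤ c → c ≤ d → d ≤ b → (∀ x ∈ Icc c d, ε ≤ g x) →
      δ * ∫ x in a..b, f x ≤ (b - a) * ∫ x in c..d, f x →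
      δ * ε * ∫ x in a..b, f x ≤ (b - a) * ∫ x in a..b, f x * g x := by
    intro c d hac hcd hdb hεcd havg
    have := mul_integral_le_integral_mul_of_le_on_s7 hac hcd hdb (hfi c d hac hcd hdb) hfg hfg0
      (fun x hx => hf0 x ⟨hac.trans hx.1, hx.2.trans hdb⟩) hεcd
    nlinarith [mul_le_mul_of_nonneg_left havg hε0,
      mul_le_mul_of_nonneg_left this (sub_nonneg.2 hab)]
  rcases hf with hmono | hanti
  · refine reduce (b - δ) b (by linarith) (by linarith) le_rfl (fun x hx => hε x (Or.inr hx)) ?_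
    simpa using hmono.mul_integral_le_mul_integral_final (c := b - δ) (by linarith) (by linarith)
  · refine reduce a (a + δ) le_rfl (by linarith) hδb (fun x hx => hε x (Or.inl hx)) ?_
    simpa using hanti.mul_integral_le_mul_integral_initial (c := a + δ) (by linarith) hδb

theorem exists_pos_le_near_endpoints {g : ℝ → ℝ} {a b : ℝ} (hab : a < b)
    (hg : ContinuousOn g (Icc a b)) (ha : 0 < g a) (hb : 0 < g b) :
    ∃ ε > 0, ∃ δ > 0, a + δ ≤ b ∧ ∀ x ∈ Icc a (a + δ) ∪ Icc (b - δ) b, ε ≤ g x := by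
  obtain ⟨ε, hε, hεa, hεb⟩ : ∃ ε, 0 < ε ∧ ε < g a ∧ ε < g b :=
    ⟨_, half_pos (lt_min ha hb), (half_lt_self (lt_min ha hb)).trans_le (min_le_left _ _),
      (half_lt_self (lt_min ha hb)).trans_le (min_le_right _ _)⟩
  have hnear_a : ∀ᶠ x in 𝓝[≥] a, ε < g x := by
    rw [← nhdsWithin_Icc_eq_nhdsGE hab]
    exact (hg a (left_mem_Icc.2 hab.le)).eventually_const_lt hεa
  have hnear_b : ∀ᶠ x in 𝓝[≤] b, ε < g x := by
    rw [← nhdsWithin_Icc_eq_nhdsLE hab]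
    exact (hg b (right_mem_Icc.2 hab.le)).eventually_const_lt hεb
  obtain ⟨u, hau, hu⟩ := mem_nhdsGE_iff_exists_Icc_subset.1 hnear_a
  obtain ⟨l, hlb, hl⟩ := mem_nhdsLE_iff_exists_Icc_subset.1 hnear_b
  set δ := min (min (u - a) (b - l)) (b - a)
  have hδu : δ ≤ u - a := (min_le_left _ _).trans (min_le_left _ _)
  have hδl : δ ≤ b - l := (min_le_left _ _).trans (min_le_right _ _)
  have hδb : δ ≤ b - a := min_le_right _ _
  refine ⟨ε, hε, δ, by simp [δ, hau, hlb, hab], by linarith, ?_⟩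
  rintro x (hx | hx)
  · exact (hu ⟨hx.1, by linarith [hx.2]⟩).le
  · exact (hl ⟨by linarith [hx.1], hx.2⟩).le

theorem integral_mul_le_sSup_image_mul_integral {f g : ℝ → ℝ} {a b : ℝ} (hab : a ≤ b)
    (hf : IntervalIntegrable f volume a b) (hf0 : ∀ x ∈ Icc a b, 0 ≤ f x)
    (hg : ContinuousOn g (Icc a b)) :
    ∫ x in a..b, f x * g x ≤ sSup (g '' Icc a b) * ∫ x in a..b, f x := by
  have hbdd : BddAbove (g '' Icc a b) := (isCompact_Icc.image_of_continuousOn hg).bddAbove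
  calc ∫ x in a..b, f x * g x ≤ ∫ x in a..b, sSup (g '' Icc a b) * f x :=
        integral_mono_on hab (hf.mul_continuousOn (by rwa [uIcc_of_le hab])) (hf.const_mul _)
          fun x hx => by
            rw [mul_comm _ (f x)]
            exact mul_le_mul_of_nonneg_left (le_csSup hbdd (mem_image_of_mem g hx)) (hf0 x hx)
    _ = sSup (g '' Icc a b) * ∫ x in a..b, f x := intervalIntegral.integral_const_mul _ _

theorem monotone_or_antitone_const_rpow {r : ℝ} (hr : 0 < r) :
    Monotone (fun x : ℝ => r ^ x) ∨ Antitone (fun x : ℝ => r ^ x) := by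
  rcases le_total 1 r with h | h
  · exact Or.inl fun _ _ hxy => rpow_le_rpow_of_exponent_le h hxy
  · exact Or.inr fun _ _ hxy => rpow_le_rpow_of_exponent_ge hr h hxy

theorem stmt_7 (μ : ℝ → ℝ) (hc : ContinuousOn μ (Set.Icc 0 1))
    (hnn : ∀ α ∈ Set.Icc (0:ℝ) 1, 0 ≤ μ α) (h0 : 0 < μ 0) (h1 : 0 < μ 1) :
    ∃ c > 0, ∀ r : ℝ, 0 < r →
      c * ∫ α in (0:ℝ)..1, r ^ α ≤ (∫ α in (0:ℝ)..1, r ^ α * μ α) ∧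
      (∫ α in (0:ℝ)..1, r ^ α * μ α) ≤ sSup (μ '' Set.Icc 0 1) * ∫ α in (0:ℝ)..1, r ^ α := by
  obtain ⟨ε, hε, δ, hδ, hδ1, hμ⟩ := exists_pos_le_near_endpoints zero_lt_one hc h0 h1
  refine ⟨δ * ε, by positivity, fun r hr => ⟨?_, ?_⟩⟩
  · have hmono : MonotoneOn (fun α : ℝ => r ^ α) (Icc 0 1) ∨
        AntitoneOn (fun α : ℝ => r ^ α) (Icc 0 1) :=
      (monotone_or_antitone_const_rpow hr).imp (·.monotoneOn _) (·.antitoneOn _)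
    simpa using mul_integral_le_integral_mul_of_le_near_endpoints hmono
      (fun α _ => (rpow_pos_of_pos hr α).le) hc hnn hδ.le hδ1 hε.le hμ
  · exact integral_mul_le_sSup_image_mul_integral zero_le_one
      ((continuous_const_rpow hr.ne').intervalIntegrable 0 1)
      (fun α _ => (rpow_pos_of_pos hr α).le) hc
end

section
/- Let λ > 0 and ψ ∈ (0, π/2), and define z(p) = λ(1 + sin(ip − ψ)) for p ∈ ℂ, so that z'(p) = iλ·cos(ip − ψ). Then for p = ξ + iη with ξ, η ∈ ℝ one has z(p) = λ(1 − sin(ψ+η)·cosh ξ) + iλ·cos(ψ+η)·sinh ξ, and if moreover ψ + η ∈ (0, π/2), then z(p) ≠ 0 and |z'(p)/z(p)|² = (cosh ξ + sin(ψ+η))/(cosh ξ − sin(ψ+η)); consequently |z'(p)/z(p)|² ≤ (1 + sin(ψ+η))/(1 − sin(ψ+η)). -/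
open Real

/-!
Write `w = i p - ψ`, so `Re w = -(ψ + η)` and `Im w = ξ`. The addition formulas give
`|1 + sin w|² = (cosh (Im w) + sin (Re w))²` and `|cos w|² = cosh² (Im w) - sin² (Re w)`, so
`|z'/z|² = |cos w|² / |1 + sin w|²` collapses to `(cosh ξ + sin θ) / (cosh ξ - sin θ)` with
`θ = ψ + η`; for `0 ≤ sin θ < 1` this is decreasing in `cosh ξ ≥ 1`, hence maximal at `ξ = 0`.
-/

namespace Complex

theorem re_sin (w : ℂ) : (sin w).re = Real.sin w.re * Real.cosh w.im := by
  conv_lhs => rw [← re_add_im w, sin_add_mul_I]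
  simp [← ofReal_sin, ← ofReal_cos, ← ofReal_sinh, ← ofReal_cosh]

theorem im_sin (w : ℂ) : (sin w).im = Real.cos w.re * Real.sinh w.im := by
  conv_lhs => rw [← re_add_im w, sin_add_mul_I]
  simp [← ofReal_sin, ← ofReal_cos, ← ofReal_sinh, ← ofReal_cosh]

theorem re_cos (w : ℂ) : (cos w).re = Real.cos w.re * Real.cosh w.im := by
  conv_lhs => rw [← re_add_im w, cos_add_mul_I]
  simp [← ofReal_sin, ← ofReal_cos, ← ofReal_sinh, ← ofReal_cosh]

theorem im_cos (w : ℂ) : (cos w).im = -(Real.sin w.re * Real.sinh w.im) := by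
  conv_lhs => rw [← re_add_im w, cos_add_mul_I]
  simp [← ofReal_sin, ← ofReal_cos, ← ofReal_sinh, ← ofReal_cosh]

theorem normSq_one_add_sin (w : ℂ) :
    normSq (1 + sin w) = (Real.cosh w.im + Real.sin w.re) ^ 2 := by
  rw [normSq_apply]
  simp only [add_re, add_im, one_re, one_im, re_sin, im_sin]
  linear_combination (Real.sin w.re ^ 2 - 1) * Real.cosh_sq_sub_sinh_sq w.im +
    Real.sinh w.im ^ 2 * Real.sin_sq_add_cos_sq w.re

theorem normSq_cos (w : ℂ) :
    normSq (cos w) = Real.cosh w.im ^ 2 - Real.sin w.re ^ 2 := by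
  rw [normSq_apply, re_cos, im_cos]
  linear_combination -Real.sin w.re ^ 2 * Real.cosh_sq_sub_sinh_sq w.im +
    Real.cosh w.im ^ 2 * Real.sin_sq_add_cos_sq w.re

-- Holds without hypothesis: where `cosh (Im w) + sin (Re w) = 0` both sides are junk `0`.
theorem normSq_cos_div_one_add_sin (w : ℂ) :
    normSq (cos w / (1 + sin w)) =
      (Real.cosh w.im - Real.sin w.re) / (Real.cosh w.im + Real.sin w.re) := by
  rw [normSq_div, normSq_cos, normSq_one_add_sin]
  rcases eq_or_ne (Real.cosh w.im + Real.sin w.re) 0 with h | h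
  · simp [h]
  · field_simp
    ring

theorem one_add_sin_ne_zero {w : ℂ} (h : -1 < Real.sin w.re) : 1 + sin w ≠ 0 := by
  rw [← normSq_pos, normSq_one_add_sin]
  nlinarith [Real.one_le_cosh w.im]

end Complex

theorem add_div_sub_le_one_add_div_one_sub {c s : ℝ} (hc : 1 ≤ c) (hs₀ : 0 ≤ s) (hs₁ : s < 1) :
    (c + s) / (c - s) ≤ (1 + s) / (1 - s) := by
  rw [div_le_div_iff₀ (by linarith) (by linarith)]
  nlinarith

theorem stmt_11_general (lam ψ ξ η : ℝ) (hlam : 0 < lam)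
    (p z z' : ℂ) (hp : p = (ξ : ℂ) + (η : ℂ) * Complex.I)
    (hz : z = (lam : ℂ) * (1 + Complex.sin (Complex.I * p - (ψ : ℂ))))
    (hz' : z' = Complex.I * (lam : ℂ) * Complex.cos (Complex.I * p - (ψ : ℂ))) :
    z = (⟨lam * (1 - Real.sin (ψ + η) * Real.cosh ξ),
          lam * Real.cos (ψ + η) * Real.sinh ξ⟩ : ℂ) ∧
    (ψ + η ∈ Set.Ioo 0 (π / 2) →
      z ≠ 0 ∧
      ‖z' / z‖ ^ 2 =
        (Real.cosh ξ + Real.sin (ψ + η)) / (Real.cosh ξ - Real.sin (ψ + η)) ∧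
      ‖z' / z‖ ^ 2 ≤ (1 + Real.sin (ψ + η)) / (1 - Real.sin (ψ + η))) := by
  set w := Complex.I * p - (ψ : ℂ)
  have hre : w.re = -(ψ + η) := by simp [w, hp]; ring
  have him : w.im = ξ := by simp [w, hp]
  have hz_eq : z = ⟨lam * (1 - Real.sin (ψ + η) * Real.cosh ξ),
      lam * Real.cos (ψ + η) * Real.sinh ξ⟩ := by
    rw [hz]
    apply Complex.ext <;>
      simp only [Complex.mul_re, Complex.mul_im, Complex.add_re, Complex.add_im, Complex.one_re,
        Complex.one_im, Complex.ofReal_re, Complex.ofReal_im, Complex.re_sin, Complex.im_sin, hre,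
        him, Real.sin_neg, Real.cos_neg] <;> ring
  refine ⟨hz_eq, fun ⟨hθ₀, hθ₁⟩ => ?_⟩
  have hs₀ : 0 < Real.sin (ψ + η) := Real.sin_pos_of_pos_of_lt_pi hθ₀ (by linarith [pi_pos])
  have hs₁ : Real.sin (ψ + η) < 1 := by
    simpa using Real.sin_lt_sin_of_lt_of_le_pi_div_two (by linarith) le_rfl hθ₁
  have hw : 1 + Complex.sin w ≠ 0 :=
    Complex.one_add_sin_ne_zero (by rw [hre, Real.sin_neg]; linarith)
  have hquot : z' / z = Complex.I * (Complex.cos w / (1 + Complex.sin w)) := by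
    rw [hz, hz', mul_right_comm, mul_comm, mul_div_mul_left _ _ (by exact_mod_cast hlam.ne'),
      mul_div_assoc]
  have hratio : ‖z' / z‖ ^ 2 =
      (Real.cosh ξ + Real.sin (ψ + η)) / (Real.cosh ξ - Real.sin (ψ + η)) := by
    rw [hquot, norm_mul, Complex.norm_I, one_mul, Complex.sq_norm,
      Complex.normSq_cos_div_one_add_sin, hre, him, Real.sin_neg, sub_neg_eq_add, ← sub_eq_add_neg]
  refine ⟨by rw [hz]; exact mul_ne_zero (by exact_mod_cast hlam.ne') hw, hratio, ?_⟩
  rw [hratio]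
  exact add_div_sub_le_one_add_div_one_sub (Real.one_le_cosh ξ) hs₀.le hs₁

theorem stmt_11 (lam ψ ξ η : ℝ) (hlam : 0 < lam) (hψ : ψ ∈ Set.Ioo 0 (π / 2))
    (p z z' : ℂ) (hp : p = (ξ : ℂ) + (η : ℂ) * Complex.I)
    (hz : z = (lam : ℂ) * (1 + Complex.sin (Complex.I * p - (ψ : ℂ))))
    (hz' : z' = Complex.I * (lam : ℂ) * Complex.cos (Complex.I * p - (ψ : ℂ))) :
    z = (⟨lam * (1 - Real.sin (ψ + η) * Real.cosh ξ),
          lam * Real.cos (ψ + η) * Real.sinh ξ⟩ : ℂ) ∧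
    (ψ + η ∈ Set.Ioo 0 (π / 2) →
      z ≠ 0 ∧
      ‖z' / z‖ ^ 2 =
        (Real.cosh ξ + Real.sin (ψ + η)) / (Real.cosh ξ - Real.sin (ψ + η)) ∧
      ‖z' / z‖ ^ 2 ≤ (1 + Real.sin (ψ + η)) / (1 - Real.sin (ψ + η))) :=
  stmt_11_general lam ψ ξ η hlam p z z' hp hz hz'
end

section
/- Let θ ∈ (π/2, π) and τ > 0, and define χ(z) = (1 − e^{−zτ})/τ. Let Γ_τ denote the set of z ∈ ℂ with z ≠ 0, |arg z| ≤ θ, and either |z|·τ ≤ 1, or |arg z| = θ and |z|·τ·sin θ ≤ π. Then there exist constants c, c₁, c₂ > 0 and θ' ∈ (π/2, π), depending only on θ, such that for all z ∈ Γ_τ: (i) |χ(z) − z| ≤ c·|z|²·τ; (ii) c₁·|z| ≤ |χ(z)| ≤ c₂·|z|; (iii) χ(z) ≠ 0 and |arg χ(z)| ≤ θ'. -/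
/-!
Put `w = zτ`, so that `χ(z) = (1 - e^{-w}) / τ` and every claim becomes a `τ`-free statement
about `u = 1 - e^{-w}`. On `Γ_τ` one has `|w| ≤ π / sin θ` and `|Im w| ≤ π`, and `|arg w| ≤ θ`
gives `sin θ · (-Re w) ≤ |Im w|`. Then (i) and the upper bound in (ii) are Taylor remainder
estimates for `e^{-w}`. For the rest write `w = x + iy`: either `cos y ≤ 0` and `Re u ≥ 1`, or
`|y| < π/2` and `|Im u| = e^{-x} |sin y| ≥ e^{-x} (2/π) |y|`. Together with
`|1 - e^{-x}| ≥ e^{-|w|} |x|` this gives the lower bound, and together with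
`-Re u ≤ e^{-x} (-x) ≤ e^{-x} |y| / sin θ` it confines `u` to the sector
`-(2 sin θ / π) Re u ≤ |Im u|`, that is, `|arg u| ≤ π - arctan (2 sin θ / π)`.
-/

open Real

namespace Real

lemma exp_neg_mul_le_one_sub_exp_neg (x : ℝ) : exp (-x) * x ≤ 1 - exp (-x) := by
  have h : exp (-x) * exp x = 1 := by rw [← exp_add, neg_add_cancel, exp_zero]
  nlinarith [add_one_le_exp x, exp_pos (-x)]

lemma exp_neg_mul_abs_le_abs_one_sub_exp_neg {x M : ℝ} (hx : |x| ≤ M) :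
    exp (-M) * |x| ≤ |1 - exp (-x)| := by
  rcases le_or_gt 0 x with h | h
  · have hexp : exp (-M) ≤ exp (-x) := exp_le_exp.2 (by linarith [le_abs_self x])
    have := exp_neg_mul_le_one_sub_exp_neg x
    rw [abs_of_nonneg h, abs_of_nonneg (by nlinarith [exp_pos (-x)])]
    nlinarith
  · have hexp : exp (-M) ≤ 1 := exp_le_one_iff.2 (by linarith [abs_nonneg x])
    have := add_one_le_exp (-x)
    rw [abs_of_neg h, abs_of_nonpos (by linarith)]
    nlinarith

lemma two_div_pi_mul_abs_le_abs_sin_of_cos_pos {y : ℝ} (hy : |y| ≤ π) (hcos : 0 < cos y) :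
    2 / π * |y| ≤ |sin y| := by
  have hy' : |y| ≤ π / 2 := by
    by_contra! h
    have := cos_nonpos_of_pi_div_two_le_of_le h.le (by linarith [pi_pos])
    rw [cos_abs] at this
    linarith
  rw [abs_sin_eq_sin_abs_of_abs_le_pi hy]
  exact mul_le_sin (abs_nonneg y) hy'

end Real

namespace Complex

lemma abs_im_eq_norm_mul_sin_abs_arg (z : ℂ) : |z.im| = ‖z‖ * Real.sin |z.arg| := by
  rw [← norm_mul_sin_arg, abs_mul, abs_norm,
    Real.abs_sin_eq_sin_abs_of_abs_le_pi (abs_arg_le_pi z)]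

lemma re_eq_norm_mul_cos_abs_arg (z : ℂ) : z.re = ‖z‖ * Real.cos |z.arg| := by
  rw [Real.cos_abs, norm_mul_cos_arg]

lemma norm_div_ofReal {τ : ℝ} (hτ : 0 < τ) (v : ℂ) : ‖v / τ‖ = ‖v‖ / τ := by
  rw [norm_div, norm_real, Real.norm_of_nonneg hτ.le]

lemma arg_div_ofReal {τ : ℝ} (hτ : 0 < τ) (v : ℂ) : arg (v / τ) = arg v := by
  rw [div_eq_mul_inv, ← ofReal_inv, arg_mul_real (inv_pos.2 hτ)]

lemma sin_mul_neg_re_le_abs_im {θ : ℝ} (hθ : θ ∈ Set.Icc (π / 2) π) {w : ℂ}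
    (hw : |w.arg| ≤ θ) : Real.sin θ * -w.re ≤ |w.im| := by
  have hs : 0 ≤ Real.sin θ :=
    Real.sin_nonneg_of_nonneg_of_le_pi (by linarith [hθ.1, pi_pos]) hθ.2
  rcases le_or_gt |w.arg| (π / 2) with h | h
  · have := abs_arg_le_pi_div_two_iff.1 h
    nlinarith [abs_nonneg w.im]
  · have hsin : Real.sin θ ≤ Real.sin |w.arg| := by
      rw [← Real.sin_pi_sub θ, ← Real.sin_pi_sub |w.arg|]
      exact Real.sin_le_sin_of_le_of_le_pi_div_two (by linarith [hθ.2]) (by linarith) (by linarith)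
    calc Real.sin θ * -w.re ≤ Real.sin θ * ‖w‖ :=
          mul_le_mul_of_nonneg_left ((neg_le_abs w.re).trans (abs_re_le_norm w)) hs
      _ ≤ ‖w‖ * Real.sin |w.arg| := by rw [mul_comm]; gcongr
      _ = |w.im| := (abs_im_eq_norm_mul_sin_abs_arg w).symm

lemma abs_arg_le_pi_sub_arctan {k : ℝ} (hk : 0 ≤ k) {u : ℂ} (h : -(k * u.re) ≤ |u.im|) :
    |u.arg| ≤ π - Real.arctan k := by
  set α := Real.arctan k
  have hα₀ : 0 ≤ α := Real.arctan_nonneg.2 hk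
  have hcos : 0 < Real.cos α := Real.cos_arctan_pos k
  by_contra! hlt
  have hu : u ≠ 0 := by
    rintro rfl
    rw [arg_zero, abs_zero] at hlt
    linarith [Real.arctan_lt_pi_div_two k]
  have hsin_α : Real.sin α = k * Real.cos α := by
    rw [← Real.tan_arctan k, Real.tan_eq_sin_div_cos, div_mul_cancel₀ _ hcos.ne']
  -- `‖u‖ sin (|arg u| + α) = cos α (|Im u| + k Re u) ≥ 0`, yet `|arg u| + α ∈ (π, 3π/2)`.
  have hsin_add : ‖u‖ * Real.sin (|u.arg| + α) = Real.cos α * (|u.im| + k * u.re) := by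
    rw [Real.sin_add, hsin_α, abs_im_eq_norm_mul_sin_abs_arg, re_eq_norm_mul_cos_abs_arg]
    ring
  have hneg : Real.sin (|u.arg| + α) < 0 := by
    have := Real.sin_pos_of_pos_of_lt_pi (x := |u.arg| + α - π) (by linarith)
      (by linarith [abs_arg_le_pi u, Real.arctan_lt_pi_div_two k])
    rw [Real.sin_sub_pi] at this
    linarith
  nlinarith [norm_pos_iff.2 hu]

lemma re_one_sub_exp_neg (w : ℂ) :
    (1 - exp (-w)).re = 1 - Real.exp (-w.re) * Real.cos w.im := by
  simp [exp_re]

lemma im_one_sub_exp_neg (w : ℂ) :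
    (1 - exp (-w)).im = Real.exp (-w.re) * Real.sin w.im := by
  simp [exp_im]

lemma norm_one_sub_exp_neg_le (w : ℂ) : ‖1 - exp (-w)‖ ≤ ‖w‖ * Real.exp ‖w‖ := by
  simpa [norm_sub_rev] using norm_exp_sub_sum_le_norm_mul_exp (-w) 1

lemma norm_one_sub_exp_neg_sub_le (w : ℂ) :
    ‖1 - exp (-w) - w‖ ≤ ‖w‖ ^ 2 * Real.exp ‖w‖ := by
  have := norm_exp_sub_sum_le_norm_mul_exp (-w) 2
  rw [← norm_neg] at this
  simpa [Finset.sum_range_succ, sub_eq_add_neg, add_comm, add_left_comm] using this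

lemma exp_neg_div_pi_mul_norm_le_norm_one_sub_exp_neg {M : ℝ} {w : ℂ} (hM : ‖w‖ ≤ M)
    (him : |w.im| ≤ π) : Real.exp (-M) / π * ‖w‖ ≤ ‖1 - exp (-w)‖ := by
  have hre : |w.re| ≤ M := (abs_re_le_norm w).trans hM
  rcases le_or_gt (Real.cos w.im) 0 with hcos | hcos
  · have hu : 1 ≤ ‖1 - exp (-w)‖ := by
      refine le_trans ?_ (re_le_norm _)
      rw [re_one_sub_exp_neg]
      nlinarith [Real.exp_pos (-w.re)]
    have hME : M * Real.exp (-M) ≤ 1 := by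
      rw [Real.exp_neg, ← div_eq_mul_inv, div_le_one (Real.exp_pos M)]
      linarith [Real.add_one_le_exp M]
    calc Real.exp (-M) / π * ‖w‖ ≤ Real.exp (-M) / 1 * M := by
          gcongr
          linarith [pi_gt_three]
      _ ≤ ‖1 - exp (-w)‖ := by linarith
  · have hx : Real.exp (-M) * |w.re| ≤ ‖1 - exp (-w)‖ := by
      refine (Real.exp_neg_mul_abs_le_abs_one_sub_exp_neg hre).trans ?_
      simpa [norm_exp] using abs_norm_sub_norm_le (1 : ℂ) (exp (-w))
    have hy : Real.exp (-M) * (2 / π * |w.im|) ≤ ‖1 - exp (-w)‖ :=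
      calc Real.exp (-M) * (2 / π * |w.im|) ≤ Real.exp (-w.re) * |Real.sin w.im| := by
            gcongr
            · linarith [le_abs_self w.re]
            · exact Real.two_div_pi_mul_abs_le_abs_sin_of_cos_pos him hcos
        _ = |(1 - exp (-w)).im| := by
            rw [im_one_sub_exp_neg, abs_mul, abs_of_pos (Real.exp_pos _)]
        _ ≤ ‖1 - exp (-w)‖ := abs_im_le_norm _
    calc Real.exp (-M) / π * ‖w‖ ≤ Real.exp (-M) / π * (|w.re| + |w.im|) := by
          gcongr
          exact norm_le_abs_re_add_abs_im w
      _ = Real.exp (-M) * |w.re| / π + Real.exp (-M) * (2 / π * |w.im|) / 2 := by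
          field_simp
      _ ≤ ‖1 - exp (-w)‖ / π + ‖1 - exp (-w)‖ / 2 := by gcongr
      _ ≤ ‖1 - exp (-w)‖ := by
          have : ‖1 - exp (-w)‖ / π ≤ ‖1 - exp (-w)‖ / 2 := by
            gcongr
            linarith [pi_gt_three]
          linarith

lemma neg_mul_re_one_sub_exp_neg_le {s : ℝ} (hs : 0 ≤ s) {w : ℂ} (him : |w.im| ≤ π)
    (hsec : s * -w.re ≤ |w.im|) :
    -(2 * s / π * (1 - exp (-w)).re) ≤ |(1 - exp (-w)).im| := by
  rw [re_one_sub_exp_neg, im_one_sub_exp_neg, abs_mul, abs_of_pos (Real.exp_pos _)]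
  have hk : 0 ≤ 2 * s / π := by positivity
  have hE : 0 < Real.exp (-w.re) := Real.exp_pos _
  rcases le_or_gt (Real.cos w.im) 0 with hcos | hcos
  · have hre : 0 ≤ 1 - Real.exp (-w.re) * Real.cos w.im := by nlinarith
    nlinarith [mul_nonneg hk hre, mul_nonneg hE.le (abs_nonneg (Real.sin w.im))]
  · calc -(2 * s / π * (1 - Real.exp (-w.re) * Real.cos w.im))
          ≤ 2 * s / π * (Real.exp (-w.re) * -w.re) := by
          have := Real.exp_neg_mul_le_one_sub_exp_neg w.re
          have h1 : Real.exp (-w.re) * Real.cos w.im - 1 ≤ Real.exp (-w.re) * -w.re := by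
            nlinarith [Real.cos_le_one w.im]
          linarith [mul_le_mul_of_nonneg_left h1 hk]
      _ = Real.exp (-w.re) * (2 / π * (s * -w.re)) := by ring
      _ ≤ Real.exp (-w.re) * (2 / π * |w.im|) := by gcongr
      _ ≤ Real.exp (-w.re) * |Real.sin w.im| := by
          gcongr
          exact Real.two_div_pi_mul_abs_le_abs_sin_of_cos_pos him hcos

lemma norm_le_pi_div_sin_and_abs_im_le_pi {θ : ℝ} (hs : 0 < Real.sin θ) {w : ℂ}
    (h : ‖w‖ ≤ 1 ∨ (|w.arg| = θ ∧ ‖w‖ * Real.sin θ ≤ π)) :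
    ‖w‖ ≤ π / Real.sin θ ∧ |w.im| ≤ π := by
  rcases h with h | ⟨harg, h⟩
  · have hπ : 1 ≤ π / Real.sin θ := by
      rw [le_div_iff₀ hs]
      linarith [Real.sin_le_one θ, pi_gt_three]
    exact ⟨h.trans hπ, (abs_im_le_norm w).trans (h.trans (by linarith [pi_gt_three]))⟩
  · refine ⟨(le_div_iff₀ hs).2 h, ?_⟩
    rwa [abs_im_eq_norm_mul_sin_abs_arg, harg]

end Complex

open Complex in
theorem stmt_13 (θ : ℝ) (hθ : θ ∈ Set.Ioo (π / 2) π) :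
    ∃ c > 0, ∃ c₁ > 0, ∃ c₂ > 0, ∃ θ' ∈ Set.Ioo (π / 2) π,
      ∀ τ : ℝ, 0 < τ → ∀ z : ℂ, z ≠ 0 → |z.arg| ≤ θ →
        (‖z‖ * τ ≤ 1 ∨ (|z.arg| = θ ∧ ‖z‖ * τ * Real.sin θ ≤ π)) →
        ‖(1 - Complex.exp (-z * (τ : ℂ))) / (τ : ℂ) - z‖ ≤
            c * ‖z‖ ^ 2 * τ ∧
        c₁ * ‖z‖ ≤ ‖(1 - Complex.exp (-z * (τ : ℂ))) / (τ : ℂ)‖ ∧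
        ‖(1 - Complex.exp (-z * (τ : ℂ))) / (τ : ℂ)‖ ≤ c₂ * ‖z‖ ∧
        (1 - Complex.exp (-z * (τ : ℂ))) / (τ : ℂ) ≠ 0 ∧
        |((1 - Complex.exp (-z * (τ : ℂ))) / (τ : ℂ)).arg| ≤ θ' := by
  obtain ⟨hθ₁, hθ₂⟩ := hθ
  have hs : 0 < Real.sin θ := Real.sin_pos_of_pos_of_lt_pi (by linarith [pi_pos]) hθ₂
  have hk : 0 < 2 * Real.sin θ / π := by positivity
  set M := π / Real.sin θ
  refine ⟨Real.exp M, Real.exp_pos M, Real.exp (-M) / π, by positivity, Real.exp M,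
    Real.exp_pos M, π - Real.arctan (2 * Real.sin θ / π),
    ⟨by linarith [Real.arctan_lt_pi_div_two (2 * Real.sin θ / π)],
      by linarith [Real.arctan_pos.2 hk]⟩, ?_⟩
  intro τ hτ z hz harg hreg
  rw [neg_mul]
  set w := z * (τ : ℂ)
  have hτ' : (τ : ℂ) ≠ 0 := ofReal_ne_zero.2 hτ.ne'
  have hnorm : ‖w‖ = ‖z‖ * τ := by rw [norm_mul, norm_real, Real.norm_of_nonneg hτ.le]
  have hargw : w.arg = z.arg := arg_mul_real hτ z
  rw [← hnorm, ← hargw] at hreg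
  rw [← hargw] at harg
  obtain ⟨hwM, him⟩ := norm_le_pi_div_sin_and_abs_im_le_pi hs hreg
  have hlower := exp_neg_div_pi_mul_norm_le_norm_one_sub_exp_neg hwM him
  have hsub : (1 - exp (-w)) / τ - z = (1 - exp (-w) - w) / τ := by
    rw [sub_div _ w, show w / τ = z from mul_div_cancel_right₀ z hτ']
  refine ⟨?_, ?_, ?_, ?_, ?_⟩
  · rw [hsub, norm_div_ofReal hτ, div_le_iff₀ hτ]
    calc ‖1 - exp (-w) - w‖ ≤ ‖w‖ ^ 2 * Real.exp ‖w‖ := norm_one_sub_exp_neg_sub_le w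
      _ ≤ ‖w‖ ^ 2 * Real.exp M := by gcongr
      _ = Real.exp M * ‖z‖ ^ 2 * τ * τ := by rw [hnorm]; ring
  · rwa [norm_div_ofReal hτ, le_div_iff₀ hτ, mul_assoc, ← hnorm]
  · rw [norm_div_ofReal hτ, div_le_iff₀ hτ, mul_assoc, ← hnorm, mul_comm (Real.exp M)]
    exact (norm_one_sub_exp_neg_le w).trans (by gcongr)
  · refine div_ne_zero (norm_pos_iff.1 (lt_of_lt_of_le ?_ hlower)) hτ'
    exact mul_pos (by positivity) (norm_pos_iff.2 (mul_ne_zero hz hτ'))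
  · rw [arg_div_ofReal hτ]
    exact abs_arg_le_pi_sub_arctan hk.le (neg_mul_re_one_sub_exp_neg_le hs.le him
      (sin_mul_neg_re_le_abs_im ⟨hθ₁.le, hθ₂.le⟩ harg))
end
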